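/- arXiv:2502.10571 — 6 statements merged into one kernel-verified Lean document; each statement's English description precedes it below -/
import Mathlib

section
/- Let S be a Perron semigroup of real 2×2 matrices, not containing the zero matrix, whose index is two (equivalently, every matrix of S has expansion index two). Then either S₁ = {I}, or S₁ = {I, M} where M is a matrix with M² = I and M ≠ ±I (i.e., M is similar to the mirror symmetry diag(1, −1)). -/
open Matrix

open scoped Classical

/-- A complex number `μ` is an eigenvalue of the complex matrix `M`. -/
def IsEigenvalueC {n : Type*} [Fintype n] (M : Matrix n n ℂ) (μ : ℂ) : Prop :=
  ∃ v : n → ℂ, v ≠ 0 ∧ M.mulVec v = μ • v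

/-- The spectral radius of a real matrix: the maximum of the moduli of the complex
eigenvalues of its complexification. -/
noncomputable def spectralRadius' {n : Type*} [Fintype n] (A : Matrix n n ℝ) : ℝ :=
  sSup {r : ℝ | ∃ μ : ℂ, IsEigenvalueC (A.map (fun x : ℝ => (x : ℂ))) μ ∧ r = ‖μ‖}

/-- `A` has a Perron eigenvalue: its spectral radius is a nonnegative eigenvalue of `A`. -/
def HasPerronEigenvalue {n : Type*} [Fintype n] (A : Matrix n n ℝ) : Prop :=
  0 ≤ spectralRadius' A ∧ ∃ v : n → ℝ, v ≠ 0 ∧ A.mulVec v = spectralRadius' A • v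

/-- The expansion index of a real matrix: the sum, over all (complex) leading eigenvalues
(those of modulus equal to the spectral radius), of their geometric multiplicities. -/
noncomputable def expansionIndex {n : Type*} [Fintype n] [DecidableEq n]
    (A : Matrix n n ℝ) : ℕ :=
  ∑ μ ∈ (((A.map (fun x : ℝ => (x : ℂ))).charpoly.roots.toFinset).filter
      (fun μ => ‖μ‖ = spectralRadius' A)),
    Module.finrank ℂ
      (LinearMap.ker (Matrix.toLin' ((A.map (fun x : ℝ => (x : ℂ))) - μ • (1 : Matrix n n ℂ))))

/-- A (multiplicative) semigroup of matrices: a nonempty set closed under multiplication. -/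
def IsMatrixSemigroup {n : Type*} [Fintype n] (S : Set (Matrix n n ℝ)) : Prop :=
  S.Nonempty ∧ ∀ A ∈ S, ∀ B ∈ S, A * B ∈ S

/-- An irreducible set of matrices: no common invariant subspace other than `{0}` and the
whole space. -/
def MatIrreducible {n : Type*} [Fintype n] (S : Set (Matrix n n ℝ)) : Prop :=
  ¬ ∃ V : Submodule ℝ (n → ℝ), V ≠ ⊥ ∧ V ≠ ⊤ ∧ ∀ A ∈ S, ∀ x ∈ V, A.mulVec x ∈ V

/-- A proper cone: a closed convex cone with nonempty interior which is pointed. -/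
def IsProperCone {n : Type*} [Fintype n] (K : Set (n → ℝ)) : Prop :=
  IsClosed K ∧ (∀ x ∈ K, ∀ y ∈ K, x + y ∈ K) ∧
    (∀ t : ℝ, 0 ≤ t → ∀ x ∈ K, t • x ∈ K) ∧
    (interior K).Nonempty ∧ (∀ x ∈ K, -x ∈ K → x = 0)

/-- The normalized set `S₁` of a semigroup `S`: matrices of positive spectral radius are
divided by their spectral radius; matrices of zero spectral radius are kept as is. -/
def normalizedSet {n : Type*} [Fintype n] (S : Set (Matrix n n ℝ)) : Set (Matrix n n ℝ) :=
  {B | ∃ A ∈ S, 0 < spectralRadius' A ∧ B = (spectralRadius' A)⁻¹ • A} ∪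
    {A ∈ S | spectralRadius' A = 0}

/-!
Let `A` be a real `2 × 2` matrix with Perron eigenvalue `r = ρ A`. Its characteristic polynomial
is `(X - r) (X - λ)` with `λ = tr A - r` real, so `r` is the only leading eigenvalue unless
`λ = -r ≠ 0`, in which case `tr A = 0` and `det A = -r²`. Otherwise the expansion index is
`dim ker (A - r)`, which is `2` only for `A = r • 1`. So in a semigroup of index two without `0`,
each `(ρ A)⁻¹ • A` is `1` or a reflection. The product of two elements of the second kind has
positive determinant, hence is scalar, namely `(ρ A * ρ B) • 1`; together with
`A * A = (ρ A * ρ A) • 1` this forces `(ρ A)⁻¹ • A = (ρ B)⁻¹ • B`, so there is at most one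
normalized reflection.
-/

open Polynomial

local notation "ρ" => spectralRadius'

namespace Matrix

theorem exists_mulVec_eq_smul_iff_isRoot_charpoly {K n : Type*} [Field K] [Fintype n]
    [DecidableEq n] (M : Matrix n n K) (μ : K) :
    (∃ v : n → K, v ≠ 0 ∧ M *ᵥ v = μ • v) ↔ M.charpoly.IsRoot μ := by
  rw [IsRoot, eval_charpoly, ← exists_mulVec_eq_zero_iff]
  simp [sub_mulVec, sub_eq_zero, eq_comm]

theorem eq_zero_of_card_le_finrank_ker {K n : Type*} [Field K] [Fintype n] [DecidableEq n]
    (N : Matrix n n K) (h : Fintype.card n ≤ Module.finrank K (LinearMap.ker (toLin' N))) :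
    N = 0 := by
  have hker : LinearMap.ker (toLin' N) = ⊤ :=
    Submodule.eq_top_of_finrank_eq <| le_antisymm (Submodule.finrank_le _) (by simpa using h)
  exact toLin'.injective (by rw [LinearMap.ker_eq_top.mp hker, map_zero])

variable {R : Type*} [CommRing R] [Nontrivial R] {M : Matrix (Fin 2) (Fin 2) R} {r : R}

theorem det_eq_mul_of_isRoot_charpoly (h : M.charpoly.IsRoot r) :
    M.det = r * (M.trace - r) := by
  rw [charpoly_fin_two, IsRoot.def] at h
  simp only [eval_add, eval_sub, eval_mul, eval_pow, eval_C, eval_X] at h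
  linear_combination h

theorem charpoly_eq_mul_of_isRoot_charpoly (h : M.charpoly.IsRoot r) :
    M.charpoly = (X - C r) * (X - C (M.trace - r)) := by
  rw [charpoly_fin_two, det_eq_mul_of_isRoot_charpoly h, C_mul, C_sub]
  ring

theorem mul_self_eq_smul_one_of_trace_eq_zero (h : M.trace = 0) : M * M = (-M.det) • 1 := by
  have hCH := M.aeval_self_charpoly
  rw [charpoly_fin_two, h] at hCH
  simp only [sq, map_zero, zero_mul, sub_zero, map_add, map_mul, aeval_X, aeval_C,
    Algebra.algebraMap_eq_smul_one] at hCH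
  rw [neg_smul, eq_neg_iff_add_eq_zero, hCH]

end Matrix

section LeadingEigenvalues

variable {n : Type*} [Fintype n] [DecidableEq n]

theorem expansionIndex_eq_finrank_ker (A : Matrix n n ℝ)
    (h : ∀ μ : ℂ, μ ∈ (A.map Complex.ofReal).charpoly.roots ∧ ‖μ‖ = ρ A ↔ μ = ρ A) :
    expansionIndex A = Module.finrank ℂ
      (LinearMap.ker (toLin' (A.map Complex.ofReal - (ρ A : ℂ) • (1 : Matrix n n ℂ)))) := by
  have hleading :
      {μ ∈ (A.map Complex.ofReal).charpoly.roots.toFinset | ‖μ‖ = ρ A} = {(ρ A : ℂ)} := by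
    ext μ
    simpa using h μ
  rw [expansionIndex, hleading, Finset.sum_singleton]

theorem eq_smul_one_of_card_le_expansionIndex (A : Matrix n n ℝ)
    (h : ∀ μ : ℂ, μ ∈ (A.map Complex.ofReal).charpoly.roots ∧ ‖μ‖ = ρ A ↔ μ = ρ A)
    (hI : Fintype.card n ≤ expansionIndex A) : A = ρ A • 1 := by
  rw [expansionIndex_eq_finrank_ker A h] at hI
  have hker := eq_zero_of_card_le_finrank_ker _ hI
  apply Matrix.map_injective Complex.ofReal_injective
  change A.map Complex.ofReal = (ρ A • (1 : Matrix n n ℝ)).map Complex.ofReal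
  rw [Matrix.map_smul' _ _ _ Complex.ofReal_mul,
    Matrix.map_one _ Complex.ofReal_zero Complex.ofReal_one]
  exact sub_eq_zero.mp hker

end LeadingEigenvalues

section TwoByTwo

variable {A : Matrix (Fin 2) (Fin 2) ℝ} {r : ℝ}

theorem roots_charpoly_map_ofReal (h : A.charpoly.IsRoot r) :
    (A.map Complex.ofReal).charpoly.roots = {(r : ℂ), ((A.trace - r : ℝ) : ℂ)} := by
  rw [show A.map Complex.ofReal = A.map Complex.ofRealHom from rfl, charpoly_map,
    charpoly_eq_mul_of_isRoot_charpoly h, Polynomial.map_mul, Polynomial.map_sub,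
    Polynomial.map_sub, map_X, map_C, map_C,
    roots_mul (mul_ne_zero (X_sub_C_ne_zero _) (X_sub_C_ne_zero _)), roots_X_sub_C,
    roots_X_sub_C]
  rfl

theorem mem_roots_charpoly_map_ofReal_and_norm_eq_iff (hr : 0 ≤ r) (h : A.charpoly.IsRoot r)
    (htrace : A.trace = 0 → r = 0) (μ : ℂ) :
    μ ∈ (A.map Complex.ofReal).charpoly.roots ∧ ‖μ‖ = r ↔ μ = r := by
  rw [roots_charpoly_map_ofReal h]
  constructor
  · rintro ⟨hμ, hnorm⟩
    simp only [Multiset.insert_eq_cons, Multiset.mem_cons, Multiset.mem_singleton] at hμ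
    rcases hμ with rfl | rfl
    · rfl
    rw [Complex.norm_real, Real.norm_eq_abs] at hnorm
    rcases (abs_eq hr).1 hnorm with h | h
    · rw [h]
    · rw [h, htrace (by linarith), neg_zero]
  · rintro rfl
    simp [abs_of_nonneg hr]

def IsScaledReflection (A : Matrix (Fin 2) (Fin 2) ℝ) : Prop :=
  0 < ρ A ∧ A.trace = 0 ∧ A.det = -ρ A ^ 2

theorem IsScaledReflection.det_neg (h : IsScaledReflection A) : A.det < 0 := by
  rw [h.2.2, neg_neg_iff_pos]
  exact pow_pos h.1 2

theorem IsScaledReflection.mul_self (h : IsScaledReflection A) : A * A = (ρ A * ρ A) • 1 := by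
  rw [mul_self_eq_smul_one_of_trace_eq_zero h.2.1, h.2.2, neg_neg, sq]

theorem IsScaledReflection.inv_smul_mul_self (h : IsScaledReflection A) :
    ((ρ A)⁻¹ • A) * ((ρ A)⁻¹ • A) = 1 := by
  rw [smul_mul_smul, h.mul_self, smul_smul, ← mul_inv, inv_mul_cancel₀ (mul_pos h.1 h.1).ne',
    one_smul]

theorem eq_smul_one_or_isScaledReflection (hP : HasPerronEigenvalue A)
    (hI : 2 ≤ expansionIndex A) : A = ρ A • 1 ∨ IsScaledReflection A := by
  obtain ⟨hρ, hroot⟩ := hP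
  rw [exists_mulVec_eq_smul_iff_isRoot_charpoly] at hroot
  by_cases hrefl : 0 < ρ A ∧ A.trace = 0
  · refine .inr ⟨hrefl.1, hrefl.2, ?_⟩
    rw [det_eq_mul_of_isRoot_charpoly hroot, hrefl.2]
    ring
  · refine .inl (eq_smul_one_of_card_le_expansionIndex A
      (mem_roots_charpoly_map_ofReal_and_norm_eq_iff hρ hroot fun htr => ?_) (by simpa using hI))
    by_contra hne
    exact hrefl ⟨hρ.lt_of_ne (Ne.symm hne), htr⟩

theorem spectralRadius'_pos (hA : A ≠ 0) (hP : HasPerronEigenvalue A)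
    (hI : 2 ≤ expansionIndex A) : 0 < ρ A := by
  rcases eq_smul_one_or_isScaledReflection hP hI with h | h
  · refine hP.1.lt_of_ne fun h0 => hA ?_
    rw [h, ← h0, zero_smul]
  · exact h.1

theorem inv_smul_eq_one_or_isScaledReflection (h : 0 < ρ A ∧ (A = ρ A • 1 ∨ IsScaledReflection A)) :
    (ρ A)⁻¹ • A = 1 ∨ IsScaledReflection A :=
  h.2.imp_left fun hA => (congrArg _ hA).trans (inv_smul_smul₀ h.1.ne' 1)

end TwoByTwo

theorem inv_smul_eq_inv_smul_of_mul_eq_smul_one {K R : Type*} [Field K] [Ring R] [Algebra K R]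
    {A B : R} {a b : K} (ha : a ≠ 0) (hb : b ≠ 0)
    (hAA : A * A = (a * a) • 1) (hAB : A * B = (a * b) • 1) : a⁻¹ • A = b⁻¹ • B := by
  have h : (a * a) • B = (a * b) • A := by
    rw [← smul_one_mul, ← hAA, mul_assoc, hAB, mul_smul_one]
  calc a⁻¹ • A = (b⁻¹ * (a * a)⁻¹) • ((a * b) • A) := by
        rw [smul_smul]; congr 1; field_simp
    _ = b⁻¹ • B := by rw [← h, smul_smul]; congr 1; field_simp

theorem normalizedSet_eq_image {n : Type*} [Fintype n] {S : Set (Matrix n n ℝ)}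
    (hS : ∀ A ∈ S, 0 < ρ A) : normalizedSet S = (fun A => (ρ A)⁻¹ • A) '' S := by
  ext B
  constructor
  · rintro (⟨A, hA, -, rfl⟩ | ⟨hB, hB0⟩)
    · exact ⟨A, hA, rfl⟩
    · exact absurd hB0 (hS B hB).ne'
  · rintro ⟨A, hA, rfl⟩
    exact .inl ⟨A, hA, hS A hA, rfl⟩

section Semigroup

variable {S : Set (Matrix (Fin 2) (Fin 2) ℝ)} {A B A₀ : Matrix (Fin 2) (Fin 2) ℝ}

theorem mul_eq_smul_one_of_isScaledReflection (hmul : ∀ A ∈ S, ∀ B ∈ S, A * B ∈ S)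
    (hS : ∀ A ∈ S, 0 < ρ A ∧ (A = ρ A • 1 ∨ IsScaledReflection A))
    (hA : A ∈ S) (hB : B ∈ S) (hA' : IsScaledReflection A) (hB' : IsScaledReflection B) :
    A * B = (ρ A * ρ B) • 1 := by
  obtain ⟨hpos, hAB⟩ := hS _ (hmul A hA B hB)
  have hdet : (A * B).det = (ρ A * ρ B) ^ 2 := by
    rw [det_mul, hA'.2.2, hB'.2.2]
    ring
  replace hAB := hAB.resolve_right fun h =>
    h.det_neg.not_gt (hdet ▸ pow_pos (mul_pos hA'.1 hB'.1) 2)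
  have hρ : ρ (A * B) = ρ A * ρ B := by
    have h := congrArg det hAB
    rw [det_smul, det_one, mul_one, Fintype.card_fin, hdet] at h
    exact (pow_left_inj₀ hpos.le (mul_pos hA'.1 hB'.1).le two_ne_zero).mp h.symm
  rw [hAB, hρ]

theorem image_inv_smul_eq_pair (hmul : ∀ A ∈ S, ∀ B ∈ S, A * B ∈ S)
    (hS : ∀ A ∈ S, 0 < ρ A ∧ (A = ρ A • 1 ∨ IsScaledReflection A))
    (hA₀ : A₀ ∈ S) (hA₀' : IsScaledReflection A₀) :
    (fun A => (ρ A)⁻¹ • A) '' S = {1, (ρ A₀)⁻¹ • A₀} := by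
  have hnormalize A (hA : A ∈ S) := inv_smul_eq_one_or_isScaledReflection (hS A hA)
  ext B
  constructor
  · rintro ⟨A, hA, rfl⟩
    refine (hnormalize A hA).imp_right fun hA' => ?_
    exact inv_smul_eq_inv_smul_of_mul_eq_smul_one hA'.1.ne' hA₀'.1.ne' hA'.mul_self
      (mul_eq_smul_one_of_isScaledReflection hmul hS hA hA₀ hA' hA₀')
  · rintro (rfl | rfl)
    · refine ⟨A₀ * A₀, hmul _ hA₀ _ hA₀, (hnormalize _ (hmul _ hA₀ _ hA₀)).resolve_right
        fun h => h.det_neg.not_gt ?_⟩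
      rw [det_mul]
      exact mul_pos_of_neg_of_neg hA₀'.det_neg hA₀'.det_neg
    · exact ⟨A₀, hA₀, rfl⟩

end Semigroup

/-- For a Perron semigroup of `2×2` matrices of index two (not containing the
zero matrix), the normalized set `S₁` is `{I}` or `{I, M}` with `M` similar to a mirror
symmetry (`M² = I`, `M ≠ ±I`). -/
theorem perron_semigroup_2x2_index_two_structure
    (S : Set (Matrix (Fin 2) (Fin 2) ℝ))
    (hsemi : IsMatrixSemigroup S)
    (hzero : (0 : Matrix (Fin 2) (Fin 2) ℝ) ∉ S)
    (hperron : ∀ A ∈ S, HasPerronEigenvalue A)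
    (hindex : (∀ A ∈ S, 2 ≤ expansionIndex A) ∧ (∃ A ∈ S, expansionIndex A = 2)) :
    normalizedSet S = {(1 : Matrix (Fin 2) (Fin 2) ℝ)} ∨
      ∃ M : Matrix (Fin 2) (Fin 2) ℝ, M * M = 1 ∧ M ≠ 1 ∧ M ≠ -1 ∧
        normalizedSet S = {1, M} := by
  obtain ⟨hne, hmul⟩ := hsemi
  have hS : ∀ A ∈ S, 0 < ρ A ∧ (A = ρ A • 1 ∨ IsScaledReflection A) := fun A hA =>
    ⟨spectralRadius'_pos (ne_of_mem_of_not_mem hA hzero) (hperron A hA) (hindex.1 A hA),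
      eq_smul_one_or_isScaledReflection (hperron A hA) (hindex.1 A hA)⟩
  rw [normalizedSet_eq_image fun A hA => (hS A hA).1]
  by_cases hrefl : ∃ A₀ ∈ S, IsScaledReflection A₀
  · obtain ⟨A₀, hA₀, hA₀'⟩ := hrefl
    have htr : ((ρ A₀)⁻¹ • A₀).trace = 0 := by rw [trace_smul, hA₀'.2.1, smul_zero]
    exact .inr ⟨_, hA₀'.inv_smul_mul_self, fun h => by simp [h] at htr,
      fun h => by simp [h] at htr, image_inv_smul_eq_pair hmul hS hA₀ hA₀'⟩
  · push Not at hrefl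
    refine .inl ((Set.image_congr fun A hA => ?_).trans (hne.image_const 1))
    exact (inv_smul_eq_one_or_isScaledReflection (hS A hA)).resolve_right (hrefl A hA)
end

section
/- For every odd d ≥ 3, the special orthogonal group SO(d) is Perron and has no invariant cone: (a) every matrix A ∈ SO(d) has a Perron eigenvalue (in fact ρ(A) = 1 and 1 is an eigenvalue of A); (b) there is no proper cone K ⊆ ℝ^d with A K ⊆ K for every A ∈ SO(d). -/
open Matrix

open scoped Classical

/-! For orthogonal `A` with `det A = 1`, writing `1 - A = (Aᵀ - 1) A` gives
`det (1 - A) = det (A - 1)`, while in odd dimension `det (1 - A) = -det (A - 1)`; so `1` is an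
eigenvalue, and since orthogonal matrices preserve length every complex eigenvalue has modulus `1`.
For the cone: the product of the Householder reflections in a nonzero `x` and in some `y ⊥ x` is a
rotation sending `x` to `-x`, so an invariant cone containing `x ≠ 0` is not pointed. -/

section FixedVector
variable {n : Type*} [Fintype n] [DecidableEq n]

theorem det_sub_one_eq_zero_of_orthogonal {R : Type*} [CommRing R] [NoZeroDivisors R] [CharZero R]
    {A : Matrix n n R} (hA : Aᵀ * A = 1) (hdet : A.det = 1)
    (hodd : Odd (Fintype.card n)) : (A - 1).det = 0 := by
  have hsymm : (1 - A).det = (A - 1).det := by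
    rw [← det_transpose (A - 1), transpose_sub, transpose_one,
      show 1 - A = (Aᵀ - 1) * A by rw [sub_mul, hA, one_mul], det_mul, hdet, mul_one]
  have hanti : (1 - A).det = -(A - 1).det := by
    rw [← neg_sub, det_neg, hodd.neg_one_pow, neg_one_mul]
  exact self_eq_neg.1 (hsymm.symm.trans hanti)

theorem exists_mulVec_eq_self_of_orthogonal {K : Type*} [Field K] [CharZero K]
    {A : Matrix n n K} (hA : Aᵀ * A = 1) (hdet : A.det = 1) (hodd : Odd (Fintype.card n)) :
    ∃ v : n → K, v ≠ 0 ∧ A *ᵥ v = v := by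
  obtain ⟨v, hv0, hv⟩ :=
    exists_mulVec_eq_zero_iff.2 (det_sub_one_eq_zero_of_orthogonal hA hdet hodd)
  exact ⟨v, hv0, by rwa [sub_mulVec, one_mulVec, sub_eq_zero] at hv⟩

end FixedVector

section SpectralRadius
variable {n : Type*} [Fintype n] [DecidableEq n]

open ComplexOrder in
theorem norm_eq_one_of_isEigenvalueC {M : Matrix n n ℂ} (hM : Mᴴ * M = 1) {μ : ℂ}
    (hμ : IsEigenvalueC M μ) : ‖μ‖ = 1 := by
  obtain ⟨v, hv0, hMv⟩ := hμ
  have hisom : star (M *ᵥ v) ⬝ᵥ (M *ᵥ v) = star v ⬝ᵥ v := by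
    rw [star_mulVec, dotProduct_mulVec, vecMul_vecMul, hM, vecMul_one]
  rw [hMv, star_smul, smul_dotProduct, dotProduct_smul, smul_smul] at hisom
  have hconj : star μ * μ = 1 :=
    (mul_left_eq_self₀.1 hisom).resolve_right (dotProduct_star_self_eq_zero.not.2 hv0)
  have hsq : ‖μ‖ ^ 2 = 1 := by
    rw [← Complex.normSq_eq_norm_sq]
    exact_mod_cast Complex.normSq_eq_conj_mul_self.trans hconj
  exact (pow_eq_one_iff_of_nonneg (norm_nonneg μ) two_ne_zero).1 hsq

theorem spectralRadius'_eq_one_of_orthogonal {A : Matrix n n ℝ} (hA : Aᵀ * A = 1)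
    (hfix : ∃ v : n → ℝ, v ≠ 0 ∧ A *ᵥ v = v) : spectralRadius' A = 1 := by
  set M := A.map (fun x : ℝ => (x : ℂ))
  have hM : Mᴴ * M = 1 := by
    rw [← conjTranspose_map _ (fun _ => by simp), conjTranspose_eq_transpose_of_trivial]
    change Aᵀ.map Complex.ofRealHom * A.map Complex.ofRealHom = 1
    rw [← Matrix.map_mul, hA, Matrix.map_one _ (map_zero _) (map_one _)]
  have hone : IsEigenvalueC M 1 := by
    obtain ⟨v, hv0, hAv⟩ := hfix
    refine ⟨Complex.ofRealHom ∘ v,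
      fun h => hv0 (funext fun i => by simpa using congrFun h i), ?_⟩
    funext i
    rw [one_smul, Function.comp_apply, ← congrFun hAv i, RingHom.map_mulVec]
    rfl
  have hset : {r : ℝ | ∃ μ : ℂ, IsEigenvalueC M μ ∧ r = ‖μ‖} = {1} := by
    ext r
    refine ⟨fun ⟨μ, hμ, hr⟩ => hr.trans (norm_eq_one_of_isEigenvalueC hM hμ), ?_⟩
    rintro rfl
    exact ⟨1, hone, norm_one.symm⟩
  rw [spectralRadius', hset, csSup_singleton]

end SpectralRadius

section Householder
variable {n R : Type*} [Fintype n] [DecidableEq n] [Field R]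

def householder (u : n → R) : Matrix n n R := 1 - (2 / (u ⬝ᵥ u)) • vecMulVec u u

variable {u : n → R}

theorem householder_transpose : (householder u)ᵀ = householder u := by
  simp [householder, transpose_vecMulVec]

theorem householder_mulVec (v : n → R) :
    householder u *ᵥ v = v - (2 / (u ⬝ᵥ u) * (u ⬝ᵥ v)) • u := by
  simp [householder, sub_mulVec, smul_mulVec, vecMulVec_mulVec, smul_smul, mul_comm]

theorem householder_mulVec_self (hu : u ⬝ᵥ u ≠ 0) : householder u *ᵥ u = -u := by
  rw [householder_mulVec, div_mul_cancel₀ _ hu, two_smul]; abel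

theorem householder_mulVec_of_dotProduct_eq_zero {v : n → R} (h : u ⬝ᵥ v = 0) :
    householder u *ᵥ v = v := by
  simp [householder_mulVec, h]

theorem householder_mul_self (hu : u ⬝ᵥ u ≠ 0) : householder u * householder u = 1 := by
  refine ext_iff_mulVec.2 fun v => ?_
  rw [← mulVec_mulVec, householder_mulVec v, mulVec_sub, mulVec_smul, householder_mulVec_self hu,
    householder_mulVec, one_mulVec]
  simp

theorem det_householder (hu : u ⬝ᵥ u ≠ 0) : (householder u).det = -1 := by
  rw [householder, sub_eq_add_neg, ← neg_smul, ← smul_vecMulVec, vecMulVec_eq Unit,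
    det_one_add_replicateCol_mul_replicateRow, dotProduct_smul, smul_eq_mul, neg_mul,
    div_mul_cancel₀ _ hu]
  norm_num

end Householder

theorem exists_orthogonal_det_eq_one_mulVec_eq_neg {n : Type*} [Fintype n] [DecidableEq n]
    [Nontrivial n] {x : n → ℝ} (hx : x ≠ 0) :
    ∃ A : Matrix n n ℝ, Aᵀ * A = 1 ∧ A.det = 1 ∧ A *ᵥ x = -x := by
  obtain ⟨y, hy, hyx⟩ := exists_ne_zero_dotProduct_eq_zero x
  have hxx : x ⬝ᵥ x ≠ 0 := dotProduct_self_eq_zero.not.2 hx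
  have hyy : y ⬝ᵥ y ≠ 0 := dotProduct_self_eq_zero.not.2 hy
  refine ⟨householder x * householder y, ?_, ?_, ?_⟩
  · rw [transpose_mul, householder_transpose, householder_transpose, Matrix.mul_assoc,
      ← Matrix.mul_assoc (householder x), householder_mul_self hxx, Matrix.one_mul,
      householder_mul_self hyy]
  · rw [det_mul, det_householder hxx, det_householder hyy]
    norm_num
  · rw [← mulVec_mulVec, householder_mulVec_of_dotProduct_eq_zero hyx,
      householder_mulVec_self hxx]

theorem exists_mem_ne_zero_of_interior_nonempty {E : Type*} [NormedAddCommGroup E]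
    [NormedSpace ℝ E] [Nontrivial E] {K : Set E} (hK : (interior K).Nonempty) :
    ∃ x ∈ K, x ≠ 0 := by
  by_contra! h
  have : interior K ⊆ interior {0} := interior_mono h
  rw [interior_singleton] at this
  exact hK.ne_empty (Set.subset_empty_iff.1 this)

/-- For odd `d ≥ 3`, `SO(d)` is Perron (every element has spectral radius `1`
and `1` is an eigenvalue) and has no invariant proper cone. -/
theorem SO_odd_perron_and_no_invariant_cone
    {d : ℕ} (hd : 3 ≤ d) (hodd : Odd d) :
    (∀ A : Matrix (Fin d) (Fin d) ℝ, Aᵀ * A = 1 → A.det = 1 →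
      spectralRadius' A = 1 ∧ ∃ v : Fin d → ℝ, v ≠ 0 ∧ A.mulVec v = v) ∧
    ¬ ∃ K : Set (Fin d → ℝ), IsProperCone K ∧
        ∀ A : Matrix (Fin d) (Fin d) ℝ, Aᵀ * A = 1 → A.det = 1 →
          ∀ x ∈ K, A.mulVec x ∈ K := by
  have hcard : Odd (Fintype.card (Fin d)) := by rwa [Fintype.card_fin]
  have : Nontrivial (Fin d) := Fin.nontrivial_iff_two_le.2 (by omega)
  refine ⟨fun A hA hdet => ?_, ?_⟩
  · have hfix := exists_mulVec_eq_self_of_orthogonal hA hdet hcard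
    exact ⟨spectralRadius'_eq_one_of_orthogonal hA hfix, hfix⟩
  · rintro ⟨K, ⟨-, -, -, hint, hpointed⟩, hinv⟩
    obtain ⟨x, hxK, hx0⟩ := exists_mem_ne_zero_of_interior_nonempty hint
    obtain ⟨A, hA, hdet, hAx⟩ := exists_orthogonal_det_eq_one_mulVec_eq_neg hx0
    exact hx0 (hpointed x hxK (hAx ▸ hinv A hA hdet x hxK))
end

section
/- Let d ≥ 3 be odd and let G be a subgroup of SO(d) that is irreducible (its elements have no common invariant linear subspace other than {0} and ℝ^d). Then every matrix A ∈ G has a Perron eigenvalue, and there is no proper cone K ⊆ ℝ^d with A K ⊆ K for every A ∈ G. -/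
open Matrix

open scoped Classical

/-!
Orthogonal matrices have all complex eigenvalues on the unit circle, and for `A ∈ SO(d)` with
`d` odd, `det (A - 1) = det (Aᵀ (A - 1)) = det (1 - A) = -det (A - 1)`, so `1` is an eigenvalue:
the spectral radius `1` is a Perron eigenvalue.

If a proper cone `K` were `G`-invariant, then, `G` being closed under inverses, every `A ∈ G` maps
the compact set `C = K ∩ {x | x ⬝ᵥ x ≤ R}` onto itself and preserves Lebesgue measure, so the
barycentre `∫ x in C, x` is fixed by `G`. A functional that is nonnegative on `K` and positive at
an interior point of `K` has positive integral over `C`, so the barycentre is nonzero and spans a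
`G`-invariant line, which irreducibility forbids as soon as `d ≥ 2`.
-/

open MeasureTheory

theorem setIntegral_pos_of_pos_on_isOpen {X : Type*} [TopologicalSpace X] [MeasurableSpace X]
    [OpensMeasurableSpace X] {μ : Measure X} [μ.IsOpenPosMeasure] {g : X → ℝ}
    {S U : Set X} (hS : MeasurableSet S) (hg : IntegrableOn g S μ)
    (hg_nonneg : ∀ x ∈ S, 0 ≤ g x) (hU : IsOpen U) (hU_ne : U.Nonempty) (hUS : U ⊆ S)
    (hg_pos : ∀ x ∈ U, 0 < g x) : 0 < ∫ x in S, g x ∂μ := by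
  rw [setIntegral_pos_iff_support_of_nonneg_ae
    ((ae_restrict_iff' hS).mpr (.of_forall hg_nonneg)) hg]
  exact (hU.measure_pos μ hU_ne).trans_le
    (measure_mono fun x hx => ⟨(hg_pos x hx).ne', hUS hx⟩)

section Eigenvalues

open scoped ComplexOrder

variable {n : Type*} [Fintype n]

theorem norm_eq_one_of_conjTranspose_mul_self_eq_one [DecidableEq n] {𝕜 : Type*} [RCLike 𝕜]
    {M : Matrix n n 𝕜} (hM : Mᴴ * M = 1) {μ : 𝕜} {v : n → 𝕜} (hv : v ≠ 0)
    (hMv : M *ᵥ v = μ • v) : ‖μ‖ = 1 := by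
  have hnorm : star (M *ᵥ v) ⬝ᵥ (M *ᵥ v) = star v ⬝ᵥ v := by
    rw [star_mulVec, ← dotProduct_mulVec, mulVec_mulVec, hM, one_mulVec]
  rw [hMv, star_smul, smul_dotProduct, dotProduct_smul, smul_smul] at hnorm
  have hμ : star μ * μ = 1 :=
    mul_right_cancel₀ (dotProduct_star_self_eq_zero.not.mpr hv) (by simpa using hnorm)
  have hsq : ‖μ‖ ^ 2 = 1 := by
    exact_mod_cast (RCLike.conj_mul μ).symm.trans hμ
  exact (pow_eq_one_iff_of_nonneg (norm_nonneg μ) two_ne_zero).mp hsq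

theorem IsEigenvalueC.norm_eq_one [DecidableEq n] {A : Matrix n n ℝ} (hA : Aᵀ * A = 1) {μ : ℂ}
    (hμ : IsEigenvalueC (A.map (fun x : ℝ => (x : ℂ))) μ) : ‖μ‖ = 1 := by
  obtain ⟨v, hv, hAv⟩ := hμ
  refine norm_eq_one_of_conjTranspose_mul_self_eq_one ?_ hv hAv
  have hconj : (A.map (fun x : ℝ => (x : ℂ)))ᴴ = Aᵀ.map (fun x : ℝ => (x : ℂ)) := by
    ext i j; simp
  have hmap := Matrix.map_mul (L := Aᵀ) (M := A) (f := Complex.ofRealHom)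
  rw [hA, Matrix.map_one _ (map_zero _) (map_one _)] at hmap
  rw [hconj]
  exact hmap.symm

theorem isEigenvalueC_map_ofReal {A : Matrix n n ℝ} {r : ℝ} {v : n → ℝ} (hv : v ≠ 0)
    (hAv : A *ᵥ v = r • v) : IsEigenvalueC (A.map (fun x : ℝ => (x : ℂ))) r := by
  refine ⟨fun i => v i, fun h => hv (funext fun i => by simpa using congrFun h i), ?_⟩
  ext i
  have := (RingHom.map_mulVec Complex.ofRealHom A v i).symm
  rw [hAv] at this
  exact this.trans (by simp)

theorem exists_mulVec_eq_self_of_det_eq_one [DecidableEq n] (hodd : Odd (Fintype.card n))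
    {A : Matrix n n ℝ} (hA : Aᵀ * A = 1) (hdet : A.det = 1) : ∃ v : n → ℝ, v ≠ 0 ∧ A *ᵥ v = v := by
  have hsub : (A - 1).det = -(A - 1).det :=
    calc (A - 1).det = (Aᵀ * (A - 1)).det := by rw [det_mul, det_transpose, hdet, one_mul]
      _ = (1 - A)ᵀ.det := by rw [mul_sub, hA, mul_one, transpose_sub, transpose_one]
      _ = -(A - 1).det := by rw [det_transpose, ← neg_sub, det_neg, hodd.neg_one_pow, neg_one_mul]
  obtain ⟨v, hv, hAv⟩ := exists_mulVec_eq_zero_iff.mpr (by linarith : (A - 1).det = 0)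
  exact ⟨v, hv, by rwa [sub_mulVec, one_mulVec, sub_eq_zero] at hAv⟩

theorem spectralRadius'_eq_one [DecidableEq n] (hodd : Odd (Fintype.card n)) {A : Matrix n n ℝ}
    (hA : Aᵀ * A = 1) (hdet : A.det = 1) : spectralRadius' A = 1 := by
  obtain ⟨v, hv, hAv⟩ := exists_mulVec_eq_self_of_det_eq_one hodd hA hdet
  have hone : IsEigenvalueC (A.map (fun x : ℝ => (x : ℂ))) (1 : ℝ) :=
    isEigenvalueC_map_ofReal hv (by rw [hAv, one_smul])
  have hnorms :
      {r : ℝ | ∃ μ : ℂ, IsEigenvalueC (A.map (fun x : ℝ => (x : ℂ))) μ ∧ r = ‖μ‖} = {1} :=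
    Set.eq_singleton_iff_unique_mem.mpr
      ⟨⟨_, hone, by simp⟩, fun r ⟨μ, hμ, hr⟩ => hr.trans (hμ.norm_eq_one hA)⟩
  rw [spectralRadius', hnorms, csSup_singleton]

theorem hasPerronEigenvalue_of_det_eq_one [DecidableEq n] (hodd : Odd (Fintype.card n))
    {A : Matrix n n ℝ} (hA : Aᵀ * A = 1) (hdet : A.det = 1) : HasPerronEigenvalue A := by
  obtain ⟨v, hv, hAv⟩ := exists_mulVec_eq_self_of_det_eq_one hodd hA hdet
  rw [HasPerronEigenvalue, spectralRadius'_eq_one hodd hA hdet]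
  exact ⟨zero_le_one, v, hv, by rw [one_smul, hAv]⟩

end Eigenvalues

section Cone

variable {n : Type*} [Fintype n]

theorem dotProduct_mulVec_self_of_transpose_mul_self [DecidableEq n] {A : Matrix n n ℝ}
    (hA : Aᵀ * A = 1) (x : n → ℝ) : (A *ᵥ x) ⬝ᵥ (A *ᵥ x) = x ⬝ᵥ x := by
  rw [dotProduct_mulVec, ← mulVec_transpose, mulVec_mulVec, hA, one_mulVec]

theorem abs_det_eq_one_of_transpose_mul_self [DecidableEq n] {A : Matrix n n ℝ}
    (hA : Aᵀ * A = 1) : |A.det| = 1 := by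
  have hsq : A.det * A.det = 1 := by simpa using congrArg det hA
  rcases mul_self_eq_one_iff.mp hsq with h | h <;> simp [h]

theorem isCompact_setOf_dotProduct_self_le (R : ℝ) : IsCompact {x : n → ℝ | x ⬝ᵥ x ≤ R} := by
  refine Metric.isCompact_of_isClosed_isBounded
    (isClosed_le (by fun_prop) continuous_const) ((Metric.isBounded_closedBall (x := 0)
      (r := √R)).subset fun x hx => ?_)
  rw [Metric.mem_closedBall, dist_zero_right, pi_norm_le_iff_of_nonneg (Real.sqrt_nonneg R)]
  intro i
  have hi : x i ^ 2 ≤ R := by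
    rw [sq]
    exact (Finset.single_le_sum (fun j _ => mul_self_nonneg (x j)) (Finset.mem_univ i)).trans hx
  simpa using Real.abs_le_sqrt hi

theorem mulVec_setIntegral_id_of_preimage_eq [DecidableEq n] {A : Matrix n n ℝ}
    (hdet : |A.det| = 1) {S : Set (n → ℝ)} (hS : (A *ᵥ ·) ⁻¹' S = S) :
    A *ᵥ ∫ x in S, x = ∫ x in S, x := by
  have hdet0 : A.det ≠ 0 := by rw [← abs_ne_zero, hdet]; exact one_ne_zero
  let e : (n → ℝ) ≃L[ℝ] (n → ℝ) :=
    (A.toLinearEquiv' (A.invertibleOfIsUnitDet hdet0.isUnit)).toContinuousLinearEquiv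
  have hmp : MeasurePreserving e := by
    refine ⟨e.continuous.measurable, ?_⟩
    rw [show ⇑e = toLin' A from rfl, Real.map_matrix_volume_pi_eq_smul_volume_pi hdet0, abs_inv,
      hdet, inv_one, ENNReal.ofReal_one, one_smul]
  calc A *ᵥ ∫ x in S, x = e (∫ x in S, x) := rfl
    _ = ∫ x in e ⁻¹' S, e x := by
        rw [show ⇑e ⁻¹' S = S from hS, e.integral_comp_comm]
    _ = ∫ x in S, x :=
        hmp.setIntegral_preimage_emb e.toHomeomorph.measurableEmbedding (fun y => y) S

namespace IsProperCone

variable {K : Set (n → ℝ)}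

theorem zero_mem (hK : IsProperCone K) : (0 : n → ℝ) ∈ K := by
  obtain ⟨u, hu⟩ := hK.2.2.2.1
  simpa using hK.2.2.1 0 le_rfl u (interior_subset hu)

def toProperCone (hK : IsProperCone K) : ProperCone ℝ (n → ℝ) where
  carrier := K
  add_mem' hx hy := hK.2.1 _ hx _ hy
  zero_mem' := hK.zero_mem
  smul_mem' c x hx := hK.2.2.1 c c.2 x hx
  isClosed' := hK.1

theorem ne_zero_of_mem_interior [Nonempty n] (hK : IsProperCone K) {u : n → ℝ}
    (hu : u ∈ interior K) : u ≠ 0 := by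
  rintro rfl
  have hK0 : K ∈ nhds 0 := mem_interior_iff_mem_nhds.mp hu
  have hsym : K ∩ -K ∈ nhdsWithin (0 : n → ℝ) {0}ᶜ :=
    nhdsWithin_le_nhds (Filter.inter_mem hK0 (neg_mem_nhds_zero _ hK0))
  obtain ⟨x, ⟨hxK, hxnK⟩, hx⟩ :=
    Filter.nonempty_of_mem (Filter.inter_mem hsym self_mem_nhdsWithin)
  exact hx (hK.2.2.2.2 x hxK hxnK)

theorem exists_dual_pos_of_mem_interior [Nonempty n] (hK : IsProperCone K) {u : n → ℝ}
    (hu : u ∈ interior K) : ∃ f : StrongDual ℝ (n → ℝ), (∀ x ∈ K, 0 ≤ f x) ∧ 0 < f u := by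
  have hneg : -u ∉ hK.toProperCone := fun h =>
    hK.ne_zero_of_mem_interior hu (hK.2.2.2.2 u (interior_subset hu) h)
  obtain ⟨f, hf, hfu⟩ := hK.toProperCone.hyperplane_separation_point hneg
  exact ⟨f, hf, by simpa using hfu⟩

end IsProperCone

theorem exists_ne_zero_fixed_of_invariant_isProperCone [DecidableEq n] [Nonempty n]
    {G : Set (Matrix n n ℝ)} (hO : ∀ A ∈ G, Aᵀ * A = 1) (hinv : ∀ A ∈ G, A⁻¹ ∈ G)
    {K : Set (n → ℝ)} (hK : IsProperCone K) (hKG : ∀ A ∈ G, ∀ x ∈ K, A *ᵥ x ∈ K) :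
    ∃ b : n → ℝ, b ≠ 0 ∧ ∀ A ∈ G, A *ᵥ b = b := by
  obtain ⟨u, hu⟩ := hK.2.2.2.1
  obtain ⟨f, hfK, hfu⟩ := hK.exists_dual_pos_of_mem_interior hu
  set C := K ∩ {x | x ⬝ᵥ x ≤ u ⬝ᵥ u + 1}
  have hC : IsCompact C := (isCompact_setOf_dotProduct_self_le _).inter_left hK.1
  have hCG : ∀ A ∈ G, (A *ᵥ ·) ⁻¹' C = C := by
    intro A hA
    have hunit : IsUnit A.det := isUnit_iff_ne_zero.mpr <| abs_ne_zero.mp <| by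
      rw [abs_det_eq_one_of_transpose_mul_self (hO A hA)]; exact one_ne_zero
    ext x
    simp only [C, Set.mem_preimage, Set.mem_inter_iff, Set.mem_ofPred_eq,
      dotProduct_mulVec_self_of_transpose_mul_self (hO A hA)]
    refine and_congr_left' ⟨fun hx => ?_, hKG A hA x⟩
    simpa [mulVec_mulVec, nonsing_inv_mul A hunit] using hKG _ (hinv A hA) _ hx
  refine ⟨∫ x in C, x, fun h0 => ?_, fun A hA => mulVec_setIntegral_id_of_preimage_eq
    (abs_det_eq_one_of_transpose_mul_self (hO A hA)) (hCG A hA)⟩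
  set U := interior K ∩ {x | x ⬝ᵥ x < u ⬝ᵥ u + 1} ∩ {x | 0 < f x}
  have hU : IsOpen U := (isOpen_interior.inter (isOpen_lt (by fun_prop) continuous_const)).inter
    (isOpen_lt continuous_const f.continuous)
  have hUC : U ⊆ C := fun x hx => ⟨interior_subset hx.1.1, show x ⬝ᵥ x ≤ _ from hx.1.2.le⟩
  have hpos : 0 < ∫ x in C, f x :=
    setIntegral_pos_of_pos_on_isOpen hC.isClosed.measurableSet
      (f.continuous.continuousOn.integrableOn_compact hC) (fun x hx => hfK x hx.1) hU
      ⟨u, ⟨hu, by simp⟩, hfu⟩ hUC fun x hx => hx.2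
  have hint : IntegrableOn (fun x : n → ℝ => x) C := continuousOn_id.integrableOn_compact hC
  rw [f.integral_comp_comm hint, h0, map_zero] at hpos
  exact hpos.false

theorem MatIrreducible.eq_zero_of_forall_mulVec_eq_self {S : Set (Matrix n n ℝ)}
    (hS : MatIrreducible S) (hn : 1 < Fintype.card n) {b : n → ℝ}
    (hb : ∀ A ∈ S, A *ᵥ b = b) : b = 0 := by
  by_contra hb0
  refine hS ⟨Submodule.span ℝ {b}, by simpa using hb0, fun htop => ?_, fun A hA x hx => ?_⟩
  · have hrank := finrank_span_singleton (K := ℝ) hb0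
    rw [htop, finrank_top, Module.finrank_fintype_fun_eq_card] at hrank
    omega
  · obtain ⟨c, rfl⟩ := Submodule.mem_span_singleton.mp hx
    rw [mulVec_smul, hb A hA]
    exact Submodule.smul_mem _ c (Submodule.mem_span_singleton_self b)

end Cone

theorem irreducible_subgroup_SO_odd_general
    {d : ℕ} (hd : 3 ≤ d) (hodd : Odd d)
    (G : Set (Matrix (Fin d) (Fin d) ℝ))
    (hSO : ∀ A ∈ G, Aᵀ * A = 1 ∧ A.det = 1)
    (hinv : ∀ A ∈ G, A⁻¹ ∈ G)
    (hirr : MatIrreducible G) :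
    (∀ A ∈ G, HasPerronEigenvalue A) ∧
      ¬ ∃ K : Set (Fin d → ℝ), IsProperCone K ∧ ∀ A ∈ G, ∀ x ∈ K, A.mulVec x ∈ K := by
  have hcard : Odd (Fintype.card (Fin d)) := by rwa [Fintype.card_fin]
  refine ⟨fun A hA => hasPerronEigenvalue_of_det_eq_one hcard (hSO A hA).1 (hSO A hA).2, ?_⟩
  rintro ⟨K, hK, hKG⟩
  have : Nonempty (Fin d) := ⟨⟨0, by omega⟩⟩
  obtain ⟨b, hb0, hb⟩ :=
    exists_ne_zero_fixed_of_invariant_isProperCone (fun A hA => (hSO A hA).1) hinv hK hKG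
  exact hb0 (hirr.eq_zero_of_forall_mulVec_eq_self (by rw [Fintype.card_fin]; omega) hb)

/-- Every irreducible subgroup of `SO(d)` for odd `d ≥ 3` is Perron and has
no invariant proper cone. -/
theorem irreducible_subgroup_SO_odd
    {d : ℕ} (hd : 3 ≤ d) (hodd : Odd d)
    (G : Set (Matrix (Fin d) (Fin d) ℝ))
    (hSO : ∀ A ∈ G, Aᵀ * A = 1 ∧ A.det = 1)
    (hone : (1 : Matrix (Fin d) (Fin d) ℝ) ∈ G)
    (hmul : ∀ A ∈ G, ∀ B ∈ G, A * B ∈ G)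
    (hinv : ∀ A ∈ G, A⁻¹ ∈ G)
    (hirr : MatIrreducible G) :
    (∀ A ∈ G, HasPerronEigenvalue A) ∧
      ¬ ∃ K : Set (Fin d → ℝ), IsProperCone K ∧ ∀ A ∈ G, ∀ x ∈ K, A.mulVec x ∈ K :=
  irreducible_subgroup_SO_odd_general hd hodd G hSO hinv hirr
end

section
/- For every m ≥ 2, the set S_m is closed under matrix multiplication (hence is a semigroup), and every matrix A ∈ S_m possesses a Perron eigenvalue; that is, S_m is a Perron semigroup. -/
open Matrix

open scoped Classical

/-- The rotation group `SO(3)`. -/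
def SO3 : Set (Matrix (Fin 3) (Fin 3) ℝ) := {U | Uᵀ * U = 1 ∧ U.det = 1}

/-- The semigroup `S_m` of `3m × 3m` matrices: `A ∈ S_m` iff there are a map
`g : {1,…,m} → {1,…,m}` and rotations `U_1, …, U_m ∈ SO(3)` such that, viewing `A` as an
`m × m` array of `3 × 3` blocks, the block in position `(g i, i)` equals `U i` and all
other blocks vanish. -/
def Sm (m : ℕ) : Set (Matrix (Fin m × Fin 3) (Fin m × Fin 3) ℝ) :=
  {A | ∃ (g : Fin m → Fin m) (U : Fin m → Matrix (Fin 3) (Fin 3) ℝ),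
    (∀ i, U i ∈ SO3) ∧
    ∀ (j i : Fin m) (a b : Fin 3), A (j, a) (i, b) = if j = g i then U i a b else 0}


lemma SO3_one : (1 : Matrix (Fin 3) (Fin 3) ℝ) ∈ SO3 := by
  constructor <;> simp [SO3]

lemma SO3_mul {U V : Matrix (Fin 3) (Fin 3) ℝ} (hU : U ∈ SO3) (hV : V ∈ SO3) : U * V ∈ SO3 := by
  obtain ⟨hU1, hU2⟩ := hU; obtain ⟨hV1, hV2⟩ := hV
  constructor
  · rw [Matrix.transpose_mul]
    calc Vᵀ * Uᵀ * (U * V) = Vᵀ * (Uᵀ * U) * V := by noncomm_ring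
    _ = 1 := by rw [hU1, mul_one, hV1]
  · rw [Matrix.det_mul, hU2, hV2, one_mul]

lemma SO3_entry_le {U : Matrix (Fin 3) (Fin 3) ℝ} (hU : U ∈ SO3) (a b : Fin 3) : |U a b| ≤ 1 := by
  have h : (Uᵀ * U) b b = 1 := by rw [hU.1]; simp
  rw [Matrix.mul_apply] at h
  simp only [Matrix.transpose_apply] at h
  have hle : U a b * U a b ≤ 1 := by
    rw [← h]
    exact Finset.single_le_sum (fun i _ => mul_self_nonneg (U i b)) (Finset.mem_univ a)
  nlinarith [abs_nonneg (U a b), sq_abs (U a b), sq_nonneg (|U a b| - 1)]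

lemma SO3_exists_fixed {U : Matrix (Fin 3) (Fin 3) ℝ} (hU : U ∈ SO3) :
    ∃ v : Fin 3 → ℝ, v ≠ 0 ∧ U.mulVec v = v := by
  have h1 : U * Uᵀ = 1 := mul_eq_one_comm.mp hU.1
  have key : U - 1 = U * (1 - Uᵀ) := by rw [mul_sub, mul_one, h1]
  have hdet : (U - 1).det = 0 := by
    have e1 : (U - 1).det = (1 - U).det := by
      rw [key, Matrix.det_mul, hU.2, one_mul, ← Matrix.det_transpose (1 - Uᵀ)]
      congr 1
      simp [Matrix.transpose_sub]
    have e2 : (1 - U : Matrix (Fin 3) (Fin 3) ℝ) = -(U - 1) := (neg_sub U 1).symm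
    rw [e2, Matrix.det_neg] at e1
    simp at e1
    linarith
  obtain ⟨v, hv, h⟩ := (Matrix.exists_mulVec_eq_zero_iff).mpr hdet
  exact ⟨v, hv, by rwa [Matrix.sub_mulVec, Matrix.one_mulVec, sub_eq_zero] at h⟩

lemma Sm_mul {m : ℕ} : ∀ A ∈ Sm m, ∀ B ∈ Sm m, A * B ∈ Sm m := by
  rintro A ⟨g, U, hU, hA⟩ B ⟨h, V, hV, hB⟩
  refine ⟨g ∘ h, fun i => U (h i) * V i, fun i => SO3_mul (hU _) (hV _), ?_⟩
  intro j i a b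
  rw [Matrix.mul_apply, Fintype.sum_prod_type]
  have step : ∀ k c, A (j,a) (k,c) * B (k,c) (i,b)
      = if k = h i then (if j = g (h i) then U (h i) a c * V i c b else 0) else 0 := by
    intro k c; rw [hA, hB]
    by_cases hk : k = h i
    · subst hk; by_cases hj : j = g (h i) <;> simp [hj]
    · simp [hk]
  simp_rw [step]
  rw [Finset.sum_comm]
  simp only [Finset.sum_ite_eq', Finset.mem_univ, if_true]
  by_cases hj : j = g (h i) <;> simp [hj, Matrix.mul_apply, Function.comp]

lemma ite_swap {P Q : Prop} [Decidable P] [Decidable Q] (x : ℝ) :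
    (if P then (if Q then x else 0) else 0) = if Q then (if P then x else 0) else 0 := by
  by_cases hP : P <;> by_cases hQ : Q <;> simp [hP, hQ]

lemma Sm_exists_fixed_vec {m : ℕ} (hm : 2 ≤ m) {A : Matrix (Fin m × Fin 3) (Fin m × Fin 3) ℝ}
    (hA : A ∈ Sm m) : ∃ x : Fin m × Fin 3 → ℝ, x ≠ 0 ∧ A.mulVec x = x := by
  obtain ⟨g, U, hU, hAf⟩ := hA
  haveI : NeZero m := ⟨by omega⟩
  -- find a periodic point of g
  obtain ⟨p, q, hpq, heq⟩ : ∃ p q : ℕ, p < q ∧ g^[p] 0 = g^[q] 0 := by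
    obtain ⟨p, q, hne, h⟩ := Finite.exists_ne_map_eq_of_infinite (fun n : ℕ => g^[n] (0 : Fin m))
    rcases hne.lt_or_gt with h' | h'
    · exact ⟨p, q, h', h⟩
    · exact ⟨q, p, h', h.symm⟩
  set s : Fin m := g^[p] 0 with hs
  have hper : 0 < q - p ∧ g^[q - p] s = s := by
    refine ⟨by omega, ?_⟩
    rw [hs, ← Function.iterate_add_apply]
    have : q - p + p = q := by omega
    rw [this, ← heq]
  have hex : ∃ n, 0 < n ∧ g^[n] s = s := ⟨q - p, hper⟩
  set k := Nat.find hex with hkdef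
  obtain ⟨hkpos, hks⟩ := Nat.find_spec hex
  have hmin : ∀ n, 0 < n → n < k → g^[n] s ≠ s := fun n h1 h2 hn =>
    Nat.find_min hex h2 ⟨h1, hn⟩
  set c : ℕ → Fin m := fun t => g^[t] s with hc
  have hcsucc : ∀ t, c (t + 1) = g (c t) := fun t => Function.iterate_succ_apply' g t s
  have hck : c k = c 0 := by simpa [hc] using hks
  have key : ∀ t1 t2, t1 < t2 → t2 < k → c t1 ≠ c t2 := by
    intro t1 t2 h12 h2k hEq
    have h1 : g^[k - t2] (c t2) = s := by
      show g^[k - t2] (g^[t2] s) = s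
      rw [← Function.iterate_add_apply]
      have : k - t2 + t2 = k := by omega
      rw [this]; exact hks
    rw [← hEq] at h1
    have h2 : g^[k - t2 + t1] s = s := by
      rw [Function.iterate_add_apply]; exact h1
    exact hmin _ (by omega) (by omega) h2
  -- rotation products along the cycle
  set P : ℕ → Matrix (Fin 3) (Fin 3) ℝ :=
    fun t => Nat.rec 1 (fun t Pt => U (c t) * Pt) t with hP
  have hP0 : P 0 = 1 := rfl
  have hPs : ∀ t, P (t + 1) = U (c t) * P t := fun t => rfl
  have hPmem : ∀ t, P t ∈ SO3 := by
    intro t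
    induction t with
    | zero => exact SO3_one
    | succ t ih => rw [hPs]; exact SO3_mul (hU _) ih
  obtain ⟨v, hv0, hvfix⟩ := SO3_exists_fixed (hPmem k)
  set w : ℕ → (Fin 3 → ℝ) := fun t => (P t).mulVec v with hw
  have hw0 : w 0 = v := by rw [hw]; simp [hP0]
  have hwsucc : ∀ t, w (t + 1) = (U (c t)).mulVec (w t) := by
    intro t; rw [hw]; simp only [hPs, ← Matrix.mulVec_mulVec]
  have hwk : w k = v := hvfix
  set x : Fin m × Fin 3 → ℝ :=
    fun r => ∑ t ∈ Finset.range k, if c t = r.1 then w t r.2 else 0 with hx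
  have hxval : ∀ i b, x (i, b) = ∑ t ∈ Finset.range k, if c t = i then w t b else 0 :=
    fun i b => rfl
  refine ⟨x, ?_, ?_⟩
  · -- x ≠ 0
    obtain ⟨a, ha⟩ := Function.ne_iff.mp hv0
    intro h0
    have hxs : x (c 0, a) = w 0 a := by
      rw [hxval]
      rw [Finset.sum_eq_single_of_mem 0 (Finset.mem_range.mpr hkpos)]
      · simp
      · intro t ht htne
        rw [if_neg]
        exact fun hEq => key 0 t (by omega) (Finset.mem_range.mp ht) hEq.symm
    rw [h0] at hxs
    rw [hw0] at hxs
    exact ha (by simpa using hxs.symm)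
  · -- A.mulVec x = x
    funext r
    obtain ⟨j, a⟩ := r
    have lhs1 : A.mulVec x (j, a)
        = ∑ t ∈ Finset.range k, if c (t + 1) = j then w (t + 1) a else 0 := by
      rw [Matrix.mulVec, dotProduct, Fintype.sum_prod_type]
      have step : ∀ (i : Fin m) (b : Fin 3), A (j, a) (i, b) * x (i, b)
          = ∑ t ∈ Finset.range k,
              if c t = i then (if j = g i then U i a b * w t b else 0) else 0 := by
        intro i b
        rw [hAf, hxval, Finset.mul_sum]
        refine Finset.sum_congr rfl fun t _ => ?_
        rw [ite_mul, zero_mul, mul_ite, mul_zero, ite_swap]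
      simp_rw [step]
      have swap1 : ∀ i : Fin m, (∑ b : Fin 3, ∑ t ∈ Finset.range k,
          if c t = i then (if j = g i then U i a b * w t b else 0) else 0)
          = ∑ t ∈ Finset.range k, ∑ b : Fin 3,
          if c t = i then (if j = g i then U i a b * w t b else 0) else 0 :=
        fun i => Finset.sum_comm
      simp_rw [swap1]
      rw [Finset.sum_comm]
      refine Finset.sum_congr rfl fun t _ => ?_
      have e1 : ∀ i : Fin m, (∑ b : Fin 3,
          if c t = i then (if j = g i then U i a b * w t b else 0) else 0)
          = if c t = i then (if j = g i then ∑ b : Fin 3, U i a b * w t b else 0) else 0 := by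
        intro i; by_cases h1 : c t = i <;> by_cases h2 : j = g i <;> simp [h1, h2]
      simp_rw [e1]
      rw [Finset.sum_ite_eq]
      simp only [Finset.mem_univ, if_true]
      rw [hwsucc t, hcsucc t]
      by_cases hj : j = g (c t)
      · rw [if_pos hj, if_pos hj.symm]; rfl
      · rw [if_neg hj, if_neg (fun h => hj h.symm)]
    have reindex : (∑ t ∈ Finset.range k, if c (t + 1) = j then w (t + 1) a else 0)
        = ∑ t ∈ Finset.range k, if c t = j then w t a else 0 := by
      have h1 := Finset.sum_range_succ' (fun t => if c t = j then w t a else 0) k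
      have h2 := Finset.sum_range_succ (fun t => if c t = j then w t a else 0) k
      have hFk : (if c k = j then w k a else 0) = (if c 0 = j then w 0 a else 0) := by
        rw [hck, hwk, hw0]
      linarith
    rw [lhs1, reindex]

lemma one_mem_Sm {m : ℕ} : (1 : Matrix (Fin m × Fin 3) (Fin m × Fin 3) ℝ) ∈ Sm m := by
  refine ⟨id, fun _ => 1, fun _ => SO3_one, ?_⟩
  intro j i a b
  rw [Matrix.one_apply]
  by_cases hj : j = i
  · subst hj; simp [Matrix.one_apply, Prod.ext_iff]
  · simp [hj, Prod.ext_iff]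

lemma pow_mem_Sm {m : ℕ} {A : Matrix (Fin m × Fin 3) (Fin m × Fin 3) ℝ} (hA : A ∈ Sm m)
    (n : ℕ) : A ^ n ∈ Sm m := by
  induction n with
  | zero => simpa using one_mem_Sm
  | succ n ih => rw [pow_succ]; exact Sm_mul _ ih _ hA

lemma Sm_entry_le {m : ℕ} {B : Matrix (Fin m × Fin 3) (Fin m × Fin 3) ℝ} (hB : B ∈ Sm m)
    (p q : Fin m × Fin 3) : |B p q| ≤ 1 := by
  obtain ⟨g, U, hU, hBf⟩ := hB
  obtain ⟨j, a⟩ := p; obtain ⟨i, b⟩ := q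
  rw [hBf]
  split
  · exact SO3_entry_le (hU i) a b
  · simp

lemma Sm_eig_bound {m : ℕ} {A : Matrix (Fin m × Fin 3) (Fin m × Fin 3) ℝ} (hA : A ∈ Sm m)
    {μ : ℂ} {v : Fin m × Fin 3 → ℂ} (hv : v ≠ 0)
    (hev : (A.map (fun x : ℝ => (x : ℂ))).mulVec v = μ • v) : ‖μ‖ ≤ 1 := by
  haveI : NeZero m := ⟨by rintro rfl; exact hv (funext fun p => absurd p.1.2 (by omega))⟩
  set M := A.map (fun x : ℝ => (x : ℂ)) with hM
  have hMn : ∀ n : ℕ, (M ^ n).mulVec v = μ ^ n • v := by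
    intro n
    induction n with
    | zero => simp
    | succ n ih =>
      rw [pow_succ, ← Matrix.mulVec_mulVec, hev, Matrix.mulVec_smul, ih, pow_succ]
      rw [smul_smul, mul_comm]
  have hMmap : ∀ n : ℕ, M ^ n = (A ^ n).map (fun x : ℝ => (x : ℂ)) := by
    intro n
    have : M = Complex.ofRealHom.mapMatrix A := rfl
    rw [this, ← map_pow]; rfl
  -- choose coordinate with max norm
  obtain ⟨q, -, hq⟩ := Finset.exists_max_image Finset.univ (fun p => ‖v p‖)
    ⟨(⟨0, by have := this.1; omega⟩, 0), Finset.mem_univ _⟩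
  have hqpos : 0 < ‖v q‖ := by
    rcases Function.ne_iff.mp hv with ⟨p, hp⟩
    exact lt_of_lt_of_le (norm_pos_iff.mpr hp) (hq p (Finset.mem_univ p))
  have hbound : ∀ n : ℕ, ‖μ‖ ^ n * ‖v q‖ ≤ (3 * m) * ‖v q‖ := by
    intro n
    have h1 : ‖μ ^ n • v q‖ = ‖μ‖ ^ n * ‖v q‖ := by
      rw [norm_smul, norm_pow]
    have h2 : μ ^ n • v q = ∑ p : Fin m × Fin 3, (M ^ n) q p * v p := by
      have := congrFun (hMn n) q
      rw [Matrix.mulVec, dotProduct] at this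
      simpa using this.symm
    calc ‖μ‖ ^ n * ‖v q‖ = ‖∑ p : Fin m × Fin 3, (M ^ n) q p * v p‖ := by rw [← h1, h2]
      _ ≤ ∑ p : Fin m × Fin 3, ‖(M ^ n) q p * v p‖ := norm_sum_le _ _
      _ ≤ ∑ _p : Fin m × Fin 3, 1 * ‖v q‖ := by
          refine Finset.sum_le_sum fun p _ => ?_
          rw [norm_mul]
          refine mul_le_mul ?_ (hq p (Finset.mem_univ p)) (norm_nonneg _) zero_le_one
          rw [hMmap n]
          have : ‖(((A ^ n) q p : ℝ) : ℂ)‖ = |(A ^ n) q p| := by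
            rw [Complex.norm_real]; rfl
          calc ‖((A ^ n).map (fun x : ℝ => (x : ℂ))) q p‖
              = |(A ^ n) q p| := this
            _ ≤ 1 := Sm_entry_le (pow_mem_Sm hA n) q p
      _ = (3 * m) * ‖v q‖ := by
          rw [Finset.sum_const, Finset.card_univ]
          simp [mul_comm, mul_assoc]
  by_contra hlt
  push_neg at hlt
  obtain ⟨n, hn⟩ := pow_unbounded_of_one_lt (3 * (m : ℝ)) hlt
  have := hbound n
  nlinarith


lemma Sm_perron {m : ℕ} (hm : 2 ≤ m) {A : Matrix (Fin m × Fin 3) (Fin m × Fin 3) ℝ}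
    (hA : A ∈ Sm m) : HasPerronEigenvalue A := by
  obtain ⟨x, hx0, hxfix⟩ := Sm_exists_fixed_vec hm hA
  have h1E : (1 : ℝ) ∈ {r : ℝ | ∃ μ : ℂ,
      IsEigenvalueC (A.map (fun x : ℝ => (x : ℂ))) μ ∧ r = ‖μ‖} := by
    refine ⟨1, ⟨fun p => (x p : ℂ), ?_, ?_⟩, by simp⟩
    · intro h0
      apply hx0
      funext p
      have := congrFun h0 p
      simpa using this
    · funext p
      have hp : ∑ q : Fin m × Fin 3, A p q * x q = x p := congrFun hxfix p
      calc (A.map (fun x : ℝ => (x : ℂ))).mulVec (fun p => (x p : ℂ)) p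
          = ∑ q : Fin m × Fin 3, ((A p q : ℂ)) * (x q : ℂ) := rfl
        _ = ((∑ q : Fin m × Fin 3, A p q * x q : ℝ) : ℂ) := by push_cast; rfl
        _ = ((x p : ℝ) : ℂ) := by rw [hp]
        _ = ((1 : ℂ) • fun p => ((x p : ℝ) : ℂ)) p := by simp
  have hub : ∀ r ∈ {r : ℝ | ∃ μ : ℂ,
      IsEigenvalueC (A.map (fun x : ℝ => (x : ℂ))) μ ∧ r = ‖μ‖}, r ≤ 1 := by
    rintro r ⟨μ, ⟨v, hv, hev⟩, rfl⟩
    exact Sm_eig_bound hA hv hev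
  have hsup : spectralRadius' A = 1 := IsGreatest.csSup_eq ⟨h1E, hub⟩
  rw [HasPerronEigenvalue, hsup]
  exact ⟨zero_le_one, x, hx0, by rw [one_smul]; exact hxfix⟩

/-- `S_m` is closed under multiplication and every matrix of `S_m` has a
Perron eigenvalue; i.e. `S_m` is a Perron semigroup. -/
theorem Sm_is_perron_semigroup {m : ℕ} (hm : 2 ≤ m) :
    (∀ A ∈ Sm m, ∀ B ∈ Sm m, A * B ∈ Sm m) ∧ (∀ A ∈ Sm m, HasPerronEigenvalue A) := by
  exact ⟨Sm_mul, fun A hA => Sm_perron hm hA⟩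
end

section
/- For every m ≥ 2, the semigroup S_m has no invariant cone: there is no proper cone K ⊆ ℝ^{3m} with A K ⊆ K for every A ∈ S_m. -/
open Matrix

open scoped Classical

/-! A cone invariant under `S_m` is invariant under a matrix sending any prescribed vector `x`
to `-x`: on each block take the half-turn about an axis orthogonal to the block `x_i` of `x`,
which lies in `SO(3)` and negates `x_i`. Pointedness then forces every element of the cone to
vanish, contradicting the nonempty interior. -/

namespace Matrix

variable {n R : Type*} [DecidableEq n] [CommRing R]

/-- For a unit vector `u` of `ℝ³` this is the rotation by `π` about the axis `u`. -/
def halfTurn (u : n → R) : Matrix n n R := (2 : R) • vecMulVec u u - 1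

theorem transpose_halfTurn (u : n → R) : (halfTurn u)ᵀ = halfTurn u := by
  simp [halfTurn, transpose_vecMulVec]

variable [Fintype n] {u : n → R}

theorem halfTurn_mulVec_of_dotProduct_eq_zero {v : n → R} (h : u ⬝ᵥ v = 0) :
    halfTurn u *ᵥ v = -v := by
  simp [halfTurn, sub_mulVec, smul_mulVec, vecMulVec_mulVec, h]

theorem halfTurn_mul_self (hu : u ⬝ᵥ u = 1) : halfTurn u * halfTurn u = 1 := by
  have hsq : vecMulVec u u * vecMulVec u u = vecMulVec u u := by
    rw [vecMulVec_mul_vecMulVec, hu, one_smul]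
  simp only [halfTurn, sub_mul, mul_sub, Matrix.smul_mul, Matrix.mul_smul, hsq, Matrix.mul_one,
    Matrix.one_mul, smul_smul]
  module

theorem det_halfTurn (hu : u ⬝ᵥ u = 1) : (halfTurn u).det = (-1) ^ (Fintype.card n + 1) := by
  have h : halfTurn u = -(1 + replicateCol Unit ((-2 : R) • u) * replicateRow Unit u) := by
    ext i j
    simp [← vecMulVec_eq, halfTurn, vecMulVec_apply]
    ring
  rw [h, det_neg, det_one_add_replicateCol_mul_replicateRow, dotProduct_smul, hu]
  norm_num [pow_succ]

end Matrix

theorem exists_dotProduct_self_eq_one_and_dotProduct_eq_zero {n : Type*} [Fintype n]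
    [DecidableEq n] (hn : 1 < Fintype.card n) (v : n → ℝ) :
    ∃ u : n → ℝ, u ⬝ᵥ u = 1 ∧ u ⬝ᵥ v = 0 := by
  obtain ⟨w, hwv, hw⟩ := (Submodule.ne_bot_iff _).1 <|
    LinearMap.ker_ne_bot_of_finrank_lt (f := dotProductEquiv ℝ n v) (by simpa)
  have hww : w ⬝ᵥ w ≠ 0 := dotProduct_self_eq_zero.not.2 hw
  have hww_nonneg : 0 ≤ w ⬝ᵥ w := Finset.sum_nonneg fun i _ => mul_self_nonneg (w i)
  refine ⟨(√(w ⬝ᵥ w))⁻¹ • w, ?_, ?_⟩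
  · rw [smul_dotProduct, dotProduct_smul, smul_smul, smul_eq_mul, ← mul_inv,
      Real.mul_self_sqrt hww_nonneg, inv_mul_cancel₀ hww]
  · rw [smul_dotProduct, dotProduct_comm w v, show v ⬝ᵥ w = 0 from hwv, smul_zero]

theorem halfTurn_mem_SO3 {u : Fin 3 → ℝ} (hu : u ⬝ᵥ u = 1) : halfTurn u ∈ SO3 :=
  ⟨by rw [transpose_halfTurn, halfTurn_mul_self hu], by norm_num [det_halfTurn hu]⟩

theorem exists_mem_SO3_mulVec_eq_neg (v : Fin 3 → ℝ) : ∃ U ∈ SO3, U *ᵥ v = -v := by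
  obtain ⟨u, hu, huv⟩ := exists_dotProduct_self_eq_one_and_dotProduct_eq_zero (by simp) v
  exact ⟨halfTurn u, halfTurn_mem_SO3 hu, halfTurn_mulVec_of_dotProduct_eq_zero huv⟩

theorem exists_mem_ne_of_interior_nonempty {X : Type*} [TopologicalSpace X] (x : X)
    [(nhdsWithin x {x}ᶜ).NeBot] {K : Set X} (hK : (interior K).Nonempty) : ∃ y ∈ K, y ≠ x := by
  by_contra! h
  simpa [interior_singleton] using hK.mono (interior_mono (show K ⊆ {x} from h))

section BlockDiagonal

variable {ι o α : Type*} [DecidableEq ι]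

def blockDiagonalFst [Zero α] (U : ι → Matrix o o α) : Matrix (ι × o) (ι × o) α :=
  of fun p q => if p.1 = q.1 then U p.1 p.2 q.2 else 0

theorem blockDiagonalFst_mulVec_apply [Fintype ι] [Fintype o] [NonUnitalNonAssocSemiring α]
    (U : ι → Matrix o o α) (x : ι × o → α) (i : ι) (a : o) :
    (blockDiagonalFst U *ᵥ x) (i, a) = (U i *ᵥ fun b => x (i, b)) a := by
  simp [blockDiagonalFst, mulVec, dotProduct, Fintype.sum_prod_type, ite_mul]

end BlockDiagonal

theorem blockDiagonalFst_mem_Sm {m : ℕ} {U : Fin m → Matrix (Fin 3) (Fin 3) ℝ}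
    (hU : ∀ i, U i ∈ SO3) : blockDiagonalFst U ∈ Sm m :=
  ⟨id, U, hU, fun j i a b => by by_cases h : j = i <;> simp [blockDiagonalFst, h]⟩

theorem exists_mem_Sm_mulVec_eq_neg {m : ℕ} (x : Fin m × Fin 3 → ℝ) :
    ∃ A ∈ Sm m, A *ᵥ x = -x := by
  choose U hU hUx using fun i => exists_mem_SO3_mulVec_eq_neg fun b => x (i, b)
  refine ⟨blockDiagonalFst U, blockDiagonalFst_mem_Sm hU, funext fun ⟨i, a⟩ => ?_⟩
  rw [blockDiagonalFst_mulVec_apply, hUx]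
  rfl

/-- `S_m` has no invariant proper cone. -/
theorem Sm_no_invariant_cone {m : ℕ} (hm : 2 ≤ m) :
    ¬ ∃ K : Set (Fin m × Fin 3 → ℝ), IsProperCone K ∧
        ∀ A ∈ Sm m, ∀ x ∈ K, A.mulVec x ∈ K := by
  rintro ⟨K, ⟨-, -, -, hK_int, hK_pointed⟩, hK_inv⟩
  have : NeZero m := ⟨by omega⟩
  obtain ⟨x, hxK, hx⟩ := exists_mem_ne_of_interior_nonempty 0 hK_int
  obtain ⟨A, hA, hAx⟩ := exists_mem_Sm_mulVec_eq_neg x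
  exact hx (hK_pointed x hxK (hAx ▸ hK_inv A hA x hxK))
end

section
/- For every m ≥ 2, the expansion index of the semigroup S_m equals three: every matrix A ∈ S_m has expansion index at least 3, and some matrix A ∈ S_m has expansion index exactly 3. -/
open Matrix

open scoped Classical

/-!
Every `A ∈ S_m` is block-monomial with orthogonal blocks, and so are its powers; their entries
are bounded by `1`, so every eigenvalue of `A` has modulus at most `1`. On its periodic points
the map `g` is a bijection `σ`, and the vectors supported on the blocks of periodic points form
an `A`-invariant subspace on which `A` acts as the block-monomial matrix of `σ`, which is
unitary. A unitary matrix is diagonalisable with all eigenvalues on the unit circle, so this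
subspace, of dimension at least `3`, is spanned by eigenvectors of `A` whose eigenvalues have
modulus `1`. Hence `ρ(A) = 1` and the expansion index of `A` is at least `3`. Equality holds for
the matrix whose first block row consists of identity blocks: it is idempotent, and its fixed
vectors are determined by their first block.
-/

open Module Module.End

theorem Function.periodicPts_nonempty {α : Type*} [Finite α] [Nonempty α] (f : α → α) :
    (Function.periodicPts f).Nonempty := by
  obtain ⟨s, t, hst, h⟩ :=
    Finite.exists_ne_map_eq_of_infinite fun k : ℕ => f^[k] (Classical.arbitrary α)
  wlog hlt : s < t generalizing s t
  · exact this t s hst.symm h.symm (by omega)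
  refine ⟨f^[s] (Classical.arbitrary α), Function.mk_mem_periodicPts (n := t - s) (by omega) ?_⟩
  rw [Function.IsPeriodicPt, Function.IsFixedPt, ← Function.iterate_add_apply,
    Nat.sub_add_cancel hlt.le, h]

theorem Submodule.finrank_finset_sup_le_sum {K V ι : Type*} [DivisionRing K] [AddCommGroup V]
    [Module K V] [FiniteDimensional K V] (s : Finset ι) (p : ι → Submodule K V) :
    finrank K ↥(s.sup p) ≤ ∑ i ∈ s, finrank K (p i) := by
  classical
  induction s using Finset.induction_on with
  | empty => simp
  | insert i s hi ih =>
    rw [Finset.sup_insert, Finset.sum_insert hi]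
    exact (Submodule.finrank_add_le_finrank_add_finrank _ _).trans (by omega)

namespace Matrix

section Eigenspace

variable {n n' K : Type*} [Fintype n] [DecidableEq n] [Fintype n'] [DecidableEq n'] [Field K]

theorem ker_toLin'_sub_smul_one (M : Matrix n n K) (μ : K) :
    LinearMap.ker (toLin' (M - μ • 1)) = eigenspace (toLin' M) μ := by
  ext v
  rw [LinearMap.mem_ker, mem_eigenspace_iff, toLin'_apply, toLin'_apply, sub_mulVec,
    smul_mulVec, one_mulVec, sub_eq_zero]

theorem mem_charpoly_roots_toFinset_iff (M : Matrix n n K) (μ : K) :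
    μ ∈ M.charpoly.roots.toFinset ↔ HasEigenvalue (toLin' M) μ := by
  rw [Multiset.mem_toFinset, Polynomial.mem_roots M.charpoly_monic.ne_zero,
    hasEigenvalue_iff_isRoot_charpoly, charpoly_toLin']

theorem finrank_eigenspace_le_of_mul_eq_mul {M : Matrix n n K} {B : Matrix n' n' K}
    {P : Matrix n n' K} {Q : Matrix n' n K} (hQP : Q * P = 1) (h : M * P = P * B) (μ : K) :
    finrank K (eigenspace (toLin' B) μ) ≤ finrank K (eigenspace (toLin' M) μ) := by
  have hinj : Function.Injective (toLin' P) := fun v w hvw => by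
    simpa [mulVec_mulVec, hQP] using congrArg (Q *ᵥ ·) hvw
  have hmap : (eigenspace (toLin' B) μ).map (toLin' P) ≤ eigenspace (toLin' M) μ := by
    rintro _ ⟨w, hw, rfl⟩
    rw [SetLike.mem_coe, mem_eigenspace_iff, toLin'_apply] at hw
    rw [mem_eigenspace_iff, toLin'_apply, toLin'_apply, mulVec_mulVec, h, ← mulVec_mulVec, hw,
      mulVec_smul]
  exact (Submodule.equivMapOfInjective _ hinj _).finrank_eq.trans_le (Submodule.finrank_mono hmap)

theorem hasEigenvalue_of_mul_eq_mul {M : Matrix n n K} {B : Matrix n' n' K}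
    {P : Matrix n n' K} {Q : Matrix n' n K} (hQP : Q * P = 1) (h : M * P = P * B) {μ : K}
    (hμ : HasEigenvalue (toLin' B) μ) : HasEigenvalue (toLin' M) μ := by
  rw [hasEigenvalue_iff, Ne, ← Submodule.finrank_eq_zero] at hμ ⊢
  have := finrank_eigenspace_le_of_mul_eq_mul hQP h μ
  omega

end Eigenspace

section Unitary

open scoped ComplexOrder

variable {n 𝕜 : Type*} [Fintype n] [RCLike 𝕜]

theorem star_mulVec_dotProduct (N : Matrix n n 𝕜) (v w : n → 𝕜) :
    star (N *ᵥ v) ⬝ᵥ w = star v ⬝ᵥ (Nᴴ *ᵥ w) := by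
  rw [star_mulVec, dotProduct_mulVec]

theorem mulVec_eq_zero_of_mulVec_mulVec_eq_zero (N : Matrix n n 𝕜) [IsStarNormal N]
    {v : n → 𝕜} (h : N *ᵥ N *ᵥ v = 0) : N *ᵥ v = 0 := by
  have hadj : Nᴴ *ᵥ N *ᵥ v = 0 := by
    rw [← dotProduct_star_self_eq_zero, star_mulVec_dotProduct, conjTranspose_conjTranspose,
      mulVec_mulVec, ← star_eq_conjTranspose, ← star_comm_self', ← mulVec_mulVec, h,
      mulVec_zero, dotProduct_zero]
  rw [← dotProduct_star_self_eq_zero, star_mulVec_dotProduct, hadj, dotProduct_zero]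

theorem mulVec_eq_zero_of_pow_mulVec_eq_zero [DecidableEq n] (N : Matrix n n 𝕜) [IsStarNormal N]
    {v : n → 𝕜} {k : ℕ} (h : N ^ k *ᵥ v = 0) : N *ᵥ v = 0 := by
  induction k generalizing v with
  | zero =>
    rw [pow_zero, one_mulVec] at h
    rw [h, mulVec_zero]
  | succ k ih =>
    rw [pow_succ, ← mulVec_mulVec] at h
    exact mulVec_eq_zero_of_mulVec_mulVec_eq_zero N (ih h)

variable [DecidableEq n] {U : Matrix n n 𝕜} (hU : U ∈ unitaryGroup n 𝕜)
include hU

open scoped Matrix.Norms.L2Operator in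
theorem norm_eq_one_of_hasEigenvalue_of_mem_unitaryGroup {μ : 𝕜}
    (hμ : HasEigenvalue (toLin' U) μ) : ‖μ‖ = 1 :=
  mem_sphere_zero_iff_norm.1
    (spectrum.subset_circle_of_unitary hU (spectrum_toLin' U ▸ hμ.mem_spectrum))

theorem maxGenEigenspace_eq_eigenspace_of_mem_unitaryGroup (μ : 𝕜) :
    maxGenEigenspace (toLin' U) μ = eigenspace (toLin' U) μ := by
  have := isStarNormal_of_mem_unitary hU
  have : IsStarNormal (U - μ • 1) := by
    refine Commute.isStarNormal_sub ?_
    rw [star_smul, star_one]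
    exact (Commute.one_right U).smul_right _
  refine le_antisymm (fun v hv => ?_) eigenspace_le_maxGenEigenspace
  obtain ⟨k, hk⟩ := (mem_maxGenEigenspace _ _ _).1 hv
  have hsub : toLin' U - μ • 1 = toLin' (U - μ • 1) := by
    rw [map_sub, map_smul, toLin'_one]
    rfl
  rw [hsub, ← toLin'_pow, toLin'_apply] at hk
  rw [← ker_toLin'_sub_smul_one, LinearMap.mem_ker, toLin'_apply]
  exact mulVec_eq_zero_of_pow_mulVec_eq_zero _ hk

end Unitary

theorem card_le_sum_finrank_eigenspace_of_mem_unitaryGroup {n : Type*} [Fintype n]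
    [DecidableEq n] {U : Matrix n n ℂ} (hU : U ∈ unitaryGroup n ℂ) :
    Fintype.card n ≤ ∑ μ ∈ U.charpoly.roots.toFinset, finrank ℂ (eigenspace (toLin' U) μ) := by
  have htop : ⊤ ≤ U.charpoly.roots.toFinset.sup (eigenspace (toLin' U)) := by
    rw [← iSup_maxGenEigenspace_eq_top (toLin' U)]
    refine iSup_le fun μ => ?_
    rw [maxGenEigenspace_eq_eigenspace_of_mem_unitaryGroup hU]
    by_cases hμ : HasEigenvalue (toLin' U) μ
    · exact Finset.le_sup ((mem_charpoly_roots_toFinset_iff U μ).2 hμ)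
    · rw [hasEigenvalue_iff, not_not] at hμ
      exact hμ ▸ bot_le
  calc Fintype.card n = finrank ℂ (⊤ : Submodule ℂ (n → ℂ)) := by simp
    _ ≤ _ := Submodule.finrank_mono htop
    _ ≤ _ := Submodule.finrank_finset_sup_le_sum _ _

theorem norm_le_one_of_hasEigenvalue_of_norm_pow_apply_le {n K : Type*} [Fintype n]
    [DecidableEq n] [NormedField K] {M : Matrix n n K} {C : ℝ}
    (hC : ∀ k i j, ‖(M ^ k) i j‖ ≤ C) {μ : K} (hμ : HasEigenvalue (toLin' M) μ) : ‖μ‖ ≤ 1 := by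
  obtain ⟨v, hv⟩ := hμ.exists_hasEigenvector
  obtain ⟨p, hp⟩ := Function.ne_iff.1 hv.2
  have hbound (k : ℕ) : ‖μ‖ ^ k * ‖v p‖ ≤ C * ∑ q, ‖v q‖ := by
    have hk : (M ^ k *ᵥ v) p = μ ^ k * v p := by
      rw [← toLin'_apply, toLin'_pow, hv.pow_apply]
      rfl
    calc ‖μ‖ ^ k * ‖v p‖ = ‖∑ q, (M ^ k) p q * v q‖ := by
          rw [← norm_pow, ← norm_mul, ← hk]
          rfl
      _ ≤ ∑ q, ‖(M ^ k) p q‖ * ‖v q‖ := (norm_sum_le _ _).trans_eq (by simp only [norm_mul])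
      _ ≤ C * ∑ q, ‖v q‖ := by
          rw [Finset.mul_sum]
          exact Finset.sum_le_sum fun q _ => mul_le_mul_of_nonneg_right (hC k p q) (norm_nonneg _)
  by_contra! h
  obtain ⟨k, hk⟩ := pow_unbounded_of_one_lt ((C * ∑ q, ‖v q‖) / ‖v p‖) h
  exact (hbound k).not_gt ((div_lt_iff₀ (norm_pos_iff.2 hp)).1 hk)

section BlockMonomial

variable {R ι ι' ι'' κ : Type*}

def blockMonomial [Zero R] [DecidableEq ι'] (g : ι → ι') (U : ι → Matrix κ κ R) :
    Matrix (ι' × κ) (ι × κ) R :=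
  of fun p q => if p.1 = g q.1 then U q.1 p.2 q.2 else 0

theorem blockMonomial_mul [NonUnitalNonAssocSemiring R] [Fintype ι'] [Fintype κ]
    [DecidableEq ι'] [DecidableEq ι''] (g : ι' → ι'') (U : ι' → Matrix κ κ R) (g' : ι → ι')
    (U' : ι → Matrix κ κ R) :
    blockMonomial g U * blockMonomial g' U' =
      blockMonomial (g ∘ g') (fun i => U (g' i) * U' i) := by
  ext ⟨j, a⟩ ⟨i, b⟩
  simp [blockMonomial, mul_apply, Fintype.sum_prod_type, ite_mul, mul_ite, Finset.sum_ite_eq']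

theorem blockMonomial_id_one [Zero R] [One R] [DecidableEq ι] [DecidableEq κ] :
    blockMonomial id (fun _ : ι => (1 : Matrix κ κ R)) = 1 := by
  ext ⟨j, a⟩ ⟨i, b⟩
  simp [blockMonomial, one_apply, ite_and]

theorem blockMonomial_map [Zero R] {S : Type*} [Zero S] [DecidableEq ι'] (g : ι → ι')
    (U : ι → Matrix κ κ R) {f : R → S} (hf : f 0 = 0) :
    (blockMonomial g U).map f = blockMonomial g (fun i => (U i).map f) := by
  ext ⟨j, a⟩ ⟨i, b⟩
  simp [blockMonomial, apply_ite f, hf]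

theorem conjTranspose_blockMonomial_mul_self [NonUnitalNonAssocSemiring R] [StarRing R]
    [Fintype ι'] [Fintype κ] [DecidableEq ι] [DecidableEq ι'] {g : ι → ι'}
    (hg : Function.Injective g) (U : ι → Matrix κ κ R) :
    (blockMonomial g U)ᴴ * blockMonomial g U = blockMonomial id (fun i => (U i)ᴴ * U i) := by
  ext ⟨j, a⟩ ⟨i, b⟩
  rcases eq_or_ne j i with rfl | hji
  · simp [blockMonomial, mul_apply, Fintype.sum_prod_type, Finset.sum_ite_eq', apply_ite star]
  · simp [blockMonomial, mul_apply, Fintype.sum_prod_type, Finset.sum_ite_eq', apply_ite star,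
      hg.eq_iff, hji, hji.symm]

theorem conjTranspose_blockMonomial_mul_self_eq_one [CommRing R] [StarRing R] [Fintype ι']
    [Fintype κ] [DecidableEq ι] [DecidableEq ι'] [DecidableEq κ] {g : ι → ι'}
    (hg : Function.Injective g) {U : ι → Matrix κ κ R} (hU : ∀ i, U i ∈ unitaryGroup κ R) :
    (blockMonomial g U)ᴴ * blockMonomial g U = 1 := by
  have hU' (i : ι) : (U i)ᴴ * U i = 1 := mem_unitaryGroup_iff'.1 (hU i)
  simp only [conjTranspose_blockMonomial_mul_self hg, hU', blockMonomial_id_one]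

variable (ι) in
def blockMonomials [Semiring R] [Fintype ι] [DecidableEq ι] [Fintype κ] [DecidableEq κ]
    (S : Submonoid (Matrix κ κ R)) : Submonoid (Matrix (ι × κ) (ι × κ) R) where
  carrier := {A | ∃ (g : ι → ι) (U : ι → Matrix κ κ R), (∀ i, U i ∈ S) ∧ blockMonomial g U = A}
  mul_mem' := by
    rintro _ _ ⟨g, U, hU, rfl⟩ ⟨g', U', hU', rfl⟩
    exact ⟨g ∘ g', _, fun i => S.mul_mem (hU _) (hU' i), (blockMonomial_mul ..).symm⟩
  one_mem' := ⟨id, fun _ => 1, fun _ => S.one_mem, blockMonomial_id_one⟩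

end BlockMonomial

section BlockMonomialSpectrum

variable {ι κ : Type*} [Fintype ι] [DecidableEq ι] [Fintype κ] [DecidableEq κ]

theorem norm_apply_le_one_of_mem_blockMonomials {𝕜 : Type*} [RCLike 𝕜]
    {M : Matrix (ι × κ) (ι × κ) 𝕜} (hM : M ∈ blockMonomials ι (unitaryGroup κ 𝕜))
    (p q : ι × κ) : ‖M p q‖ ≤ 1 := by
  obtain ⟨g, U, hU, rfl⟩ := hM
  simp only [blockMonomial, of_apply]
  split_ifs
  · exact entry_norm_bound_of_unitary (hU _) _ _
  · simp

theorem norm_le_one_of_hasEigenvalue_of_mem_blockMonomials {𝕜 : Type*} [RCLike 𝕜]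
    {M : Matrix (ι × κ) (ι × κ) 𝕜} (hM : M ∈ blockMonomials ι (unitaryGroup κ 𝕜)) {μ : 𝕜}
    (hμ : HasEigenvalue (toLin' M) μ) : ‖μ‖ ≤ 1 :=
  norm_le_one_of_hasEigenvalue_of_norm_pow_apply_le
    (fun k => norm_apply_le_one_of_mem_blockMonomials (pow_mem hM k)) hμ

theorem card_le_sum_finrank_eigenspace_of_mem_blockMonomials [Nonempty ι]
    {M : Matrix (ι × κ) (ι × κ) ℂ} (hM : M ∈ blockMonomials ι (unitaryGroup κ ℂ)) :
    Fintype.card κ ≤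
      ∑ μ ∈ M.charpoly.roots.toFinset with ‖μ‖ = 1, finrank ℂ (eigenspace (toLin' M) μ) := by
  obtain ⟨g, U, hU, rfl⟩ := hM
  obtain ⟨i₀, hi₀⟩ := Function.periodicPts_nonempty g
  let C := Function.periodicPts g
  have hbij := Function.bijOn_periodicPts g
  let σ : C → C := hbij.mapsTo.restrict
  have hσ : Function.Injective σ := hbij.mapsTo.restrict_inj.2 hbij.injOn
  let P : Matrix (ι × κ) (C × κ) ℂ := blockMonomial Subtype.val fun _ => 1
  let B := blockMonomial σ fun i => U i
  have hPB : blockMonomial g U * P = P * B := by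
    simp only [P, B, blockMonomial_mul, mul_one, one_mul]
    rfl
  have hP : Pᴴ * P = 1 :=
    conjTranspose_blockMonomial_mul_self_eq_one Subtype.val_injective fun _ => one_mem _
  have hB : B ∈ unitaryGroup (C × κ) ℂ :=
    mem_unitaryGroup_iff'.2 (conjTranspose_blockMonomial_mul_self_eq_one hσ fun i => hU i)
  calc Fintype.card κ ≤ Fintype.card (C × κ) := by
        rw [Fintype.card_prod]
        exact Nat.le_mul_of_pos_left _ (Fintype.card_pos_iff.2 ⟨⟨i₀, hi₀⟩⟩)
    _ ≤ ∑ μ ∈ B.charpoly.roots.toFinset, finrank ℂ (eigenspace (toLin' B) μ) :=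
        card_le_sum_finrank_eigenspace_of_mem_unitaryGroup hB
    _ ≤ ∑ μ ∈ B.charpoly.roots.toFinset,
          finrank ℂ (eigenspace (toLin' (blockMonomial g U)) μ) :=
        Finset.sum_le_sum fun μ _ => finrank_eigenspace_le_of_mul_eq_mul hP hPB μ
    _ ≤ _ := Finset.sum_le_sum_of_subset fun μ hμ => by
        rw [mem_charpoly_roots_toFinset_iff] at hμ
        rw [Finset.mem_filter, mem_charpoly_roots_toFinset_iff]
        exact ⟨hasEigenvalue_of_mul_eq_mul hP hPB hμ,
          norm_eq_one_of_hasEigenvalue_of_mem_unitaryGroup hB hμ⟩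

end BlockMonomialSpectrum

section ConstBlockMonomial

variable {ι κ K : Type*} [Fintype ι] [DecidableEq ι] [Fintype κ] [DecidableEq κ] [Field K]
  (i₀ : ι)

theorem isIdempotentElem_blockMonomial_const :
    IsIdempotentElem (blockMonomial (fun _ : ι => i₀) fun _ => (1 : Matrix κ κ K)) := by
  rw [IsIdempotentElem, blockMonomial_mul]
  simp only [mul_one]
  rfl

theorem eq_one_of_hasEigenvalue_blockMonomial_const {μ : K}
    (hμ : HasEigenvalue (toLin' (blockMonomial (fun _ : ι => i₀) fun _ => (1 : Matrix κ κ K))) μ)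
    (hμ0 : μ ≠ 0) : μ = 1 := by
  have hspec := hμ.mem_spectrum
  rw [spectrum_toLin'] at hspec
  simpa [hμ0] using (isIdempotentElem_blockMonomial_const i₀).spectrum_subset K hspec

theorem finrank_eigenspace_one_blockMonomial_const_le :
    finrank K (eigenspace (toLin' (blockMonomial (fun _ : ι => i₀)
      fun _ => (1 : Matrix κ κ K))) 1) ≤ Fintype.card κ := by
  set E := eigenspace (toLin' (blockMonomial (fun _ : ι => i₀) fun _ => (1 : Matrix κ κ K))) 1
  let f : E →ₗ[K] κ → K := (LinearMap.funLeft K K fun a => (i₀, a)).comp E.subtype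
  have hf : Function.Injective f := by
    rw [← LinearMap.ker_eq_bot, Submodule.eq_bot_iff]
    rintro ⟨v, hv⟩ hfv
    rw [mem_eigenspace_iff, one_smul, toLin'_apply] at hv
    refine Subtype.ext (funext fun ⟨j, a⟩ => ?_)
    show v (j, a) = 0
    by_cases hj : j = i₀
    · subst hj
      simpa [f] using congrFun (LinearMap.mem_ker.1 hfv) a
    · rw [← hv]
      simp [mulVec, dotProduct, blockMonomial, hj]
  simpa using LinearMap.finrank_le_finrank_of_injective hf

end ConstBlockMonomial

end Matrix

theorem isEigenvalueC_iff_hasEigenvalue {n : Type*} [Fintype n] [DecidableEq n]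
    (M : Matrix n n ℂ) (μ : ℂ) : IsEigenvalueC M μ ↔ HasEigenvalue (toLin' M) μ := by
  constructor
  · rintro ⟨v, hv0, hv⟩
    exact hasEigenvalue_of_hasEigenvector ⟨by rwa [mem_eigenspace_iff, toLin'_apply], hv0⟩
  · intro hμ
    obtain ⟨v, hv, hv0⟩ := hμ.exists_hasEigenvector
    exact ⟨v, hv0, by rwa [mem_eigenspace_iff, toLin'_apply] at hv⟩

theorem expansionIndex_eq_sum_finrank_eigenspace {n : Type*} [Fintype n] [DecidableEq n]
    (A : Matrix n n ℝ) :
    expansionIndex A =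
      ∑ μ ∈ (A.map (fun x : ℝ => (x : ℂ))).charpoly.roots.toFinset with ‖μ‖ = spectralRadius' A,
        finrank ℂ (eigenspace (toLin' (A.map (fun x : ℝ => (x : ℂ)))) μ) :=
  Finset.sum_congr rfl fun μ _ => by rw [ker_toLin'_sub_smul_one]

theorem map_ofReal_mem_unitaryGroup {n : Type*} [Fintype n] [DecidableEq n]
    {U : Matrix n n ℝ} (hU : Uᵀ * U = 1) :
    U.map (fun x : ℝ => (x : ℂ)) ∈ unitaryGroup n ℂ := by
  rw [mem_unitaryGroup_iff']
  ext i j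
  have := congrFun (congrFun hU i) j
  simp only [Matrix.mul_apply, transpose_apply, Matrix.one_apply] at this
  simp only [star_apply, Matrix.mul_apply, map_apply, Matrix.one_apply, RCLike.star_def,
    Complex.conj_ofReal]
  exact_mod_cast congrArg _ this

theorem map_ofReal_mem_blockMonomials_of_mem_Sm {m : ℕ}
    {A : Matrix (Fin m × Fin 3) (Fin m × Fin 3) ℝ} (hA : A ∈ Sm m) :
    A.map (fun x : ℝ => (x : ℂ)) ∈ blockMonomials (Fin m) (unitaryGroup (Fin 3) ℂ) := by
  obtain ⟨g, U, hU, hA⟩ := hA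
  have hAg : A = blockMonomial g U := by
    ext ⟨j, a⟩ ⟨i, b⟩
    exact hA j i a b
  exact ⟨g, _, fun i => map_ofReal_mem_unitaryGroup (hU i).1,
    by rw [hAg, blockMonomial_map _ _ Complex.ofReal_zero]⟩

theorem spectralRadius'_eq_one_of_mem_Sm {m : ℕ} [NeZero m]
    {A : Matrix (Fin m × Fin 3) (Fin m × Fin 3) ℝ} (hA : A ∈ Sm m) : spectralRadius' A = 1 := by
  have hM := map_ofReal_mem_blockMonomials_of_mem_Sm hA
  refine IsGreatest.csSup_eq ⟨?_, ?_⟩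
  · obtain ⟨μ, hμ⟩ := Finset.nonempty_of_sum_ne_zero
      ((card_le_sum_finrank_eigenspace_of_mem_blockMonomials hM).trans_lt' (by simp)).ne'
    rw [Finset.mem_filter, mem_charpoly_roots_toFinset_iff] at hμ
    exact ⟨μ, (isEigenvalueC_iff_hasEigenvalue _ _).2 hμ.1, hμ.2.symm⟩
  · rintro _ ⟨μ, hμ, rfl⟩
    exact norm_le_one_of_hasEigenvalue_of_mem_blockMonomials hM
      ((isEigenvalueC_iff_hasEigenvalue _ _).1 hμ)

theorem three_le_expansionIndex_of_mem_Sm {m : ℕ} [NeZero m]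
    {A : Matrix (Fin m × Fin 3) (Fin m × Fin 3) ℝ} (hA : A ∈ Sm m) : 3 ≤ expansionIndex A := by
  rw [expansionIndex_eq_sum_finrank_eigenspace, spectralRadius'_eq_one_of_mem_Sm hA]
  simpa using card_le_sum_finrank_eigenspace_of_mem_blockMonomials
    (map_ofReal_mem_blockMonomials_of_mem_Sm hA)

theorem blockMonomial_const_mem_Sm {m : ℕ} (i₀ : Fin m) :
    blockMonomial (fun _ : Fin m => i₀) (fun _ => (1 : Matrix (Fin 3) (Fin 3) ℝ)) ∈ Sm m :=
  ⟨_, _, fun _ => ⟨by simp, det_one⟩, fun _ _ _ _ => rfl⟩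

theorem expansionIndex_blockMonomial_const_le {m : ℕ} (i₀ : Fin m) :
    expansionIndex (blockMonomial (fun _ : Fin m => i₀) fun _ => (1 : Matrix (Fin 3) (Fin 3) ℝ))
      ≤ 3 := by
  have : NeZero m := NeZero.of_pos i₀.pos
  rw [expansionIndex_eq_sum_finrank_eigenspace,
    spectralRadius'_eq_one_of_mem_Sm (blockMonomial_const_mem_Sm i₀),
    blockMonomial_map _ _ Complex.ofReal_zero,
    Matrix.map_one _ Complex.ofReal_zero Complex.ofReal_one]
  calc _ ≤ ∑ μ ∈ {1}, finrank ℂ (eigenspace (toLin'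
          (blockMonomial (fun _ : Fin m => i₀) fun _ => (1 : Matrix (Fin 3) (Fin 3) ℂ))) μ) :=
        Finset.sum_le_sum_of_subset fun μ hμ => by
          rw [Finset.mem_filter, mem_charpoly_roots_toFinset_iff] at hμ
          refine Finset.mem_singleton.2 (eq_one_of_hasEigenvalue_blockMonomial_const i₀ hμ.1 ?_)
          rintro rfl
          simp at hμ
    _ ≤ 3 := by
        rw [Finset.sum_singleton, ← Fintype.card_fin 3]
        exact finrank_eigenspace_one_blockMonomial_const_le i₀

/-- The expansion index of the semigroup `S_m` equals three: every matrix of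
`S_m` has expansion index at least `3`, and some matrix has expansion index exactly `3`. -/
theorem Sm_index_three {m : ℕ} (hm : 2 ≤ m) :
    (∀ A ∈ Sm m, 3 ≤ expansionIndex A) ∧ (∃ A ∈ Sm m, expansionIndex A = 3) := by
  have : NeZero m := ⟨by omega⟩
  exact ⟨fun A hA => three_le_expansionIndex_of_mem_Sm hA, _, blockMonomial_const_mem_Sm 0,
    (expansionIndex_blockMonomial_const_le 0).antisymm
      (three_le_expansionIndex_of_mem_Sm (blockMonomial_const_mem_Sm 0))⟩
end
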